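/- arXiv:2202.02435 — 12 statements merged into one kernel-verified Lean document; each statement's English description precedes it below -/
import Mathlib

section
/- Suppose p : [0,T] × ℝ^d → (0,∞) is continuous and, for each t ∈ [0,T], p(t,·) is a density of the pushforward of μ₀ under Φ(t,·), i.e. for every Borel set A ⊆ ℝ^d one has μ₀(Φ(t,·)⁻¹(A)) = ∫_A p(t,y) dy. Then for every x ∈ ℝ^d the function t ↦ log p(t, Φ(t,x)) is differentiable on [0,T] with derivative equal to −∑_{k=1}^d (∂f_k/∂y_k)(t, Φ(t,x)); that is, along the solution trajectory y(t) = Φ(t,x), (d/dt) log p(t, y(t)) = −div f(t, y(t)). (Instantaneous change of variables.) -/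
/-!
The change-of-variables formula for the injective C¹ map `Φ(t,·)`, together with continuity of
both sides, turns the pushforward hypothesis into the pointwise identity
`p₀(x) = |det DₓΦ(t,x)| · p(t, Φ(t,x))`. Differentiating the flow equation in `x` (the mixed
partial derivatives of the C² map `Φ` commute) shows that `J(t) = DₓΦ(t,x)` solves the variational
equation `J' = D_y f(t, Φ(t,x)) ∘ J`, so by Liouville's formula `(det J)' = tr (D_y f) · det J`.
Taking logarithms gives `(log p(t, Φ(t,x)))' = -(log |det J|)' = -div f(t, Φ(t,x))`.
-/

open MeasureTheory Set Function

namespace Matrix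

variable {𝕜 : Type*} [NontriviallyNormedField 𝕜] {n : Type*} [Fintype n] [DecidableEq n]

variable (𝕜 n) in
noncomputable def detRowContinuousMultilinear :
    ContinuousMultilinearMap 𝕜 (fun _ : n => n → 𝕜) 𝕜 where
  toMultilinearMap := detRowAlternating.toMultilinearMap
  cont := continuous_id.matrix_det

theorem sum_det_updateRow_mul {R : Type*} [CommRing R] (A M : Matrix n n R) :
    ∑ i, (M.updateRow i ((A * M) i)).det = A.trace * M.det := by
  have hrow : ∀ i, (A * M) i = ∑ k, A i k • M k := fun i => by
    ext j; simp [Matrix.mul_apply, Finset.sum_apply]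
  simp only [hrow, det_updateRow_sum, smul_eq_mul, ← Finset.sum_mul, trace, diag_apply]

theorem hasDerivWithinAt_det {M : 𝕜 → n → n → 𝕜} {A : Matrix n n 𝕜} {s : Set 𝕜} {t : 𝕜}
    (hM : HasDerivWithinAt M (A * of (M t)) s t) :
    HasDerivWithinAt (fun u => (of (M u)).det) (A.trace * (of (M t)).det) s t := by
  have h := ((detRowContinuousMultilinear 𝕜 n).hasFDerivAt (M t)).comp_hasDerivWithinAt t hM
  have hval : (detRowContinuousMultilinear 𝕜 n).linearDeriv (M t) (A * of (M t)) =
      A.trace * (of (M t)).det :=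
    (ContinuousMultilinearMap.linearDeriv_apply _ _ _).trans (sum_det_updateRow_mul A _)
  rwa [hval] at h

end Matrix

theorem LinearMap.trace_eq_sum_apply_single {R n : Type*} [CommRing R] [Fintype n] [DecidableEq n]
    (A : (n → R) →ₗ[R] (n → R)) : LinearMap.trace R _ A = ∑ k, A (Pi.single k 1) k := by
  simp [LinearMap.trace_eq_matrix_trace R (Pi.basisFun R n), LinearMap.toMatrix_eq_toMatrix',
    Matrix.trace, LinearMap.toMatrix'_apply]

namespace ContinuousLinearMap

variable {𝕜 : Type*} [NontriviallyNormedField 𝕜] [CompleteSpace 𝕜]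
  {n : Type*} [Fintype n] [DecidableEq n]

theorem hasDerivWithinAt_det {J : 𝕜 → (n → 𝕜) →L[𝕜] (n → 𝕜)} {A : (n → 𝕜) →L[𝕜] (n → 𝕜)}
    {s : Set 𝕜} {t : 𝕜} (hJ : HasDerivWithinAt J (A ∘L J t) s t) :
    HasDerivWithinAt (fun u => (J u).det)
      (LinearMap.trace 𝕜 _ (A : (n → 𝕜) →ₗ[𝕜] (n → 𝕜)) * (J t).det) s t := by
  let toMatrix : ((n → 𝕜) →L[𝕜] (n → 𝕜)) →L[𝕜] (n → n → 𝕜) :=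
    LinearMap.toContinuousLinearMap (LinearMap.toMatrix'.toLinearMap ∘ₗ coeLM 𝕜)
  have hM : HasDerivWithinAt (fun u => toMatrix (J u))
      (LinearMap.toMatrix' (A : (n → 𝕜) →ₗ[𝕜] (n → 𝕜)) * Matrix.of (toMatrix (J t))) s t :=
    (toMatrix.hasFDerivAt.comp_hasDerivWithinAt t hJ).congr_deriv (LinearMap.toMatrix'_comp _ _)
  have hdet : ∀ u, (Matrix.of (toMatrix (J u))).det = (J u).det := fun u =>
    LinearMap.det_toMatrix' _
  rw [LinearMap.trace_eq_matrix_trace 𝕜 (Pi.basisFun 𝕜 n), LinearMap.toMatrix_eq_toMatrix']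
  simpa only [hdet] using Matrix.hasDerivWithinAt_det hM

end ContinuousLinearMap

theorem ContDiffOn.uncurry_left {𝕜 E F G : Type*} [NontriviallyNormedField 𝕜]
    [NormedAddCommGroup E] [NormedSpace 𝕜 E] [NormedAddCommGroup F] [NormedSpace 𝕜 F]
    [NormedAddCommGroup G] [NormedSpace 𝕜 G] {n : WithTop ℕ∞} {f : E → F → G}
    {sE : Set E} {sF : Set F} (a : E) (ha : a ∈ sE) (h : ContDiffOn 𝕜 n (uncurry f) (sE ×ˢ sF)) :
    ContDiffOn 𝕜 n (f a) sF :=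
  h.comp (contDiff_prodMk_right a).contDiffOn fun _ hb => mk_mem_prod ha hb

section MixedPartials

variable {E F : Type*} [NormedAddCommGroup E] [NormedSpace ℝ E]
  [NormedAddCommGroup F] [NormedSpace ℝ F] {I : Set ℝ}

theorem HasFDerivWithinAt.hasFDerivAt_comp_prodMk_right {G : ℝ × E → F} {D : ℝ × E →L[ℝ] F}
    {s : ℝ} {y : E} (hG : HasFDerivWithinAt G D (I ×ˢ univ) (s, y)) (hs : s ∈ I) :
    HasFDerivAt (fun y => G (s, y)) (D ∘L ContinuousLinearMap.inr ℝ ℝ E) y :=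
  hasFDerivWithinAt_univ.1 <| hG.comp y (hasFDerivAt_prodMk_right s y).hasFDerivWithinAt
    fun y' _ => mk_mem_prod hs (mem_univ y')

theorem HasFDerivWithinAt.hasDerivWithinAt_comp_prodMk_left {G : ℝ × E → F} {D : ℝ × E →L[ℝ] F}
    {s : ℝ} {y : E} (hG : HasFDerivWithinAt G D (I ×ˢ univ) (s, y)) :
    HasDerivWithinAt (fun u => G (u, y)) (D (1, 0)) I s :=
  hG.comp_hasDerivWithinAt s ((hasDerivAt_id s).prodMk (hasDerivAt_const s y)).hasDerivWithinAt
    fun _ hu => mk_mem_prod hu (mem_univ y)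

theorem hasDerivWithinAt_fderiv_of_hasDerivWithinAt {Φ g : ℝ → E → F} (hI : UniqueDiffOn ℝ I)
    (hΦ : ContDiffOn ℝ 2 (uncurry Φ) (I ×ˢ univ))
    (hg : ∀ s ∈ I, ∀ y, HasDerivWithinAt (fun u => Φ u y) (g s y) I s)
    {t : ℝ} (ht : t ∈ I) (ht' : t ∈ closure (interior I)) (x : E) :
    HasDerivWithinAt (fun s => fderiv ℝ (Φ s) x) (fderiv ℝ (g t) x) I t := by
  set S := I ×ˢ (univ : Set E)
  have hS : UniqueDiffOn ℝ S := hI.prod uniqueDiffOn_univ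
  have hmem : ∀ s ∈ I, ∀ y, (s, y) ∈ S := fun s hs y => mk_mem_prod hs (mem_univ y)
  set D := fderivWithin ℝ (uncurry Φ) S
  have hD : ∀ z ∈ S, HasFDerivWithinAt (uncurry Φ) (D z) S z := fun z hz =>
    (hΦ.differentiableOn two_ne_zero z hz).hasFDerivWithinAt
  set D2 := fderivWithin ℝ D S (t, x)
  have hD2 : HasFDerivWithinAt D D2 S (t, x) :=
    ((hΦ.fderivWithin hS one_add_one_eq_two.le).differentiableOn one_ne_zero _
      (hmem t ht x)).hasFDerivWithinAt
  have hsymm : IsSymmSndFDerivWithinAt ℝ (uncurry Φ) S (t, x) :=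
    (hΦ _ (hmem t ht x)).isSymmSndFDerivWithinAt (by simp) hS
      (by simpa [S, interior_prod_eq, closure_prod_eq] using ht') (hmem t ht x)
  have htime : ∀ s ∈ I, ∀ y, D (s, y) (1, 0) = g s y := fun s hs y =>
    (hI s hs).eq_deriv _ (hD _ (hmem s hs y)).hasDerivWithinAt_comp_prodMk_left (hg s hs y)
  have hgt : HasFDerivAt (g t) ((ContinuousLinearMap.apply ℝ F ((1 : ℝ), (0 : E)) ∘L D2) ∘L
      ContinuousLinearMap.inr ℝ ℝ E) x := by
    have := ((ContinuousLinearMap.apply ℝ F ((1 : ℝ), (0 : E))).hasFDerivAt.comp_hasFDerivWithinAt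
      (t, x) hD2).hasFDerivAt_comp_prodMk_right ht
    exact this.congr_of_eventuallyEq (Filter.Eventually.of_forall fun y => (htime t ht y).symm)
  have hspace : ∀ s ∈ I, fderiv ℝ (Φ s) x = D (s, x) ∘L ContinuousLinearMap.inr ℝ ℝ E :=
    fun s hs => ((hD _ (hmem s hs x)).hasFDerivAt_comp_prodMk_right hs).fderiv
  have hJ : HasDerivWithinAt (fun s => D (s, x) ∘L ContinuousLinearMap.inr ℝ ℝ E)
      (D2 (1, 0) ∘L ContinuousLinearMap.inr ℝ ℝ E) I t := by
    simpa using hD2.hasDerivWithinAt_comp_prodMk_left.clm_comp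
      (hasDerivWithinAt_const t I (ContinuousLinearMap.inr ℝ ℝ E))
  rw [hgt.fderiv]
  refine (hJ.congr (fun s hs => hspace s hs) (hspace t ht)).congr_deriv ?_
  ext v
  exact hsymm _ _

end MixedPartials

theorem eq_abs_det_fderiv_mul_of_withDensity_preimage {E : Type*} [NormedAddCommGroup E]
    [NormedSpace ℝ E] [FiniteDimensional ℝ E] [MeasurableSpace E] [BorelSpace E]
    {μ : Measure E} [μ.IsAddHaarMeasure] {φ : E → E} (hφ : ContDiff ℝ 1 φ) (hinj : Injective φ)
    {q₀ q : E → ℝ} (hq₀ : Continuous q₀) (hq : Continuous q) (hq₀_nonneg : ∀ y, 0 ≤ q₀ y)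
    (hq_nonneg : ∀ y, 0 ≤ q y)
    (h : ∀ A, MeasurableSet A →
      (μ.withDensity fun y => ENNReal.ofReal (q₀ y)) (φ ⁻¹' A) = ∫⁻ y in A, ENNReal.ofReal (q y) ∂μ)
    (y : E) : q₀ y = |(fderiv ℝ φ y).det| * q (φ y) := by
  have hJ : Continuous fun z => |(fderiv ℝ φ z).det| * q (φ z) :=
    ((ContinuousLinearMap.continuous_det.comp (hφ.continuous_fderiv one_ne_zero)).abs).mul
      (hq.comp hφ.continuous)
  have hsetLIntegral : ∀ B, MeasurableSet B → ∫⁻ z in B, ENNReal.ofReal (q₀ z) ∂μ =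
      ∫⁻ z in B, ENNReal.ofReal (|(fderiv ℝ φ z).det| * q (φ z)) ∂μ := by
    intro B hB
    have hφB : MeasurableSet (φ '' B) :=
      (hφ.continuous.measurable.measurableEmbedding hinj).measurableSet_image.2 hB
    have hB' := h _ hφB
    rw [preimage_image_eq B hinj, withDensity_apply _ hB] at hB'
    rw [hB', lintegral_image_eq_lintegral_abs_det_fderiv_mul μ hB (fun z _ =>
        (hφ.differentiable one_ne_zero z).hasFDerivAt.hasFDerivWithinAt)
        hinj.injOn]
    simp_rw [ENNReal.ofReal_mul (abs_nonneg _)]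
  have hae := ae_eq_of_forall_setLIntegral_eq_of_sigmaFinite
    (ENNReal.measurable_ofReal.comp hq₀.measurable) (ENNReal.measurable_ofReal.comp hJ.measurable)
    fun B hB _ => hsetLIntegral B hB
  have heq := (Continuous.ae_eq_iff_eq μ (ENNReal.continuous_ofReal.comp hq₀)
    (ENNReal.continuous_ofReal.comp hJ)).1 hae
  exact (ENNReal.ofReal_eq_ofReal_iff (hq₀_nonneg y)
    (mul_nonneg (abs_nonneg _) (hq_nonneg _))).1 (congrFun heq y)

theorem instantaneous_change_of_variables_general
    (T : ℝ) (hT : 0 < T) (d : ℕ)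
    (f : ℝ → (Fin d → ℝ) → (Fin d → ℝ))
    (hf : ContDiff ℝ 1 (Function.uncurry f))
    (Φ : ℝ → (Fin d → ℝ) → (Fin d → ℝ))
    (hΦ : ContDiffOn ℝ 2 (Function.uncurry Φ) (Set.Icc 0 T ×ˢ Set.univ))
    (hflow : ∀ t ∈ Set.Icc (0:ℝ) T, ∀ x,
      HasDerivWithinAt (fun s => Φ s x) (f t (Φ t x)) (Set.Icc 0 T) t)
    (hbij : ∀ t ∈ Set.Icc (0:ℝ) T, Function.Bijective (Φ t))
    (hjac : ∀ t ∈ Set.Icc (0:ℝ) T, ∀ x, (fderiv ℝ (Φ t) x).det ≠ 0)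
    (p₀ : (Fin d → ℝ) → ℝ)
    (hp₀pos : ∀ y, 0 < p₀ y) (hp₀cont : Continuous p₀)
    (p : ℝ → (Fin d → ℝ) → ℝ)
    (hppos : ∀ t ∈ Set.Icc (0:ℝ) T, ∀ y, 0 < p t y)
    (hpcont : ContinuousOn (Function.uncurry p) (Set.Icc 0 T ×ˢ Set.univ))
    (hdensity : ∀ t ∈ Set.Icc (0:ℝ) T, ∀ A : Set (Fin d → ℝ), MeasurableSet A →
      (volume.withDensity fun y => ENNReal.ofReal (p₀ y)) (Φ t ⁻¹' A)
        = ∫⁻ y in A, ENNReal.ofReal (p t y)) :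
    ∀ x : Fin d → ℝ, ∀ t ∈ Set.Icc (0:ℝ) T,
      HasDerivWithinAt (fun s => Real.log (p s (Φ s x)))
        (-(∑ k, fderiv ℝ (fun y => f t y k) (Φ t x) (Pi.single k 1)))
        (Set.Icc 0 T) t := by
  intro x t ht
  have hI : UniqueDiffOn ℝ (Icc 0 T) := uniqueDiffOn_Icc hT
  have hΦs : ∀ s ∈ Icc 0 T, ContDiff ℝ 2 (Φ s) := fun s hs =>
    contDiffOn_univ.1 (hΦ.uncurry_left s hs)
  have hft : Differentiable ℝ (f t) :=
    (hf.comp (contDiff_prodMk_right t)).differentiable one_ne_zero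
  set J := fun s => fderiv ℝ (Φ s) x
  set A := fderiv ℝ (f t) (Φ t x)
  have hJ : HasDerivWithinAt J (A ∘L J t) (Icc 0 T) t := by
    have := hasDerivWithinAt_fderiv_of_hasDerivWithinAt hI hΦ hflow ht
      (by rwa [interior_Icc, closure_Ioo hT.ne]) x
    rwa [fderiv_fun_comp x (hft _) ((hΦs t ht).differentiable two_ne_zero x)] at this
  have hdensity_eq : ∀ s ∈ Icc 0 T, p₀ x = |(J s).det| * p s (Φ s x) := fun s hs =>
    eq_abs_det_fderiv_mul_of_withDensity_preimage ((hΦs s hs).of_le one_le_two) (hbij s hs).1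
      hp₀cont (continuousOn_univ.1 (hpcont.uncurry_left s hs)) (fun y => (hp₀pos y).le)
      (fun y => (hppos s hs y).le) (hdensity s hs) x
  have hlog : ∀ s ∈ Icc 0 T, Real.log (p s (Φ s x)) = Real.log (p₀ x) - Real.log (J s).det := by
    intro s hs
    rw [hdensity_eq s hs, Real.log_mul (abs_ne_zero.2 (hjac s hs x)) (hppos s hs _).ne',
      Real.log_abs]
    ring
  have hlogdet := (ContinuousLinearMap.hasDerivWithinAt_det hJ).log (hjac t ht x)
  rw [mul_div_cancel_right₀ _ (hjac t ht x)] at hlogdet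
  refine ((hlogdet.const_sub (Real.log (p₀ x))).congr hlog (hlog t ht)).congr_deriv ?_
  rw [LinearMap.trace_eq_sum_apply_single]
  simp [fderiv_apply (hft _), A]

/-- **Instantaneous change of variables.** Let `Φ` be a C² flow on `[0,T] × ℝ^d` of a C¹
vector field `f`, such that each `Φ(t,·)` is a bijection with everywhere nonzero spatial
Jacobian determinant. Let `μ₀` be the probability measure with continuous positive density
`p₀`, and suppose `p(t,·)` is a continuous positive density for the pushforward of `μ₀`
under `Φ(t,·)`. Then along each trajectory `t ↦ Φ(t,x)`,
`(d/dt) log p(t, Φ(t,x)) = − div f(t, Φ(t,x))`. -/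
theorem instantaneous_change_of_variables
    (T : ℝ) (hT : 0 < T) (d : ℕ)
    (f : ℝ → (Fin d → ℝ) → (Fin d → ℝ))
    (hf : ContDiff ℝ 1 (Function.uncurry f))
    (Φ : ℝ → (Fin d → ℝ) → (Fin d → ℝ))
    (hΦ : ContDiffOn ℝ 2 (Function.uncurry Φ) (Set.Icc 0 T ×ˢ Set.univ))
    (hΦ0 : ∀ x, Φ 0 x = x)
    (hflow : ∀ t ∈ Set.Icc (0:ℝ) T, ∀ x,
      HasDerivWithinAt (fun s => Φ s x) (f t (Φ t x)) (Set.Icc 0 T) t)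
    (hbij : ∀ t ∈ Set.Icc (0:ℝ) T, Function.Bijective (Φ t))
    (hjac : ∀ t ∈ Set.Icc (0:ℝ) T, ∀ x, (fderiv ℝ (Φ t) x).det ≠ 0)
    (p₀ : (Fin d → ℝ) → ℝ)
    (hp₀pos : ∀ y, 0 < p₀ y) (hp₀cont : Continuous p₀)
    (hp₀prob : ∫ y, p₀ y = 1)
    (p : ℝ → (Fin d → ℝ) → ℝ)
    (hppos : ∀ t ∈ Set.Icc (0:ℝ) T, ∀ y, 0 < p t y)
    (hpcont : ContinuousOn (Function.uncurry p) (Set.Icc 0 T ×ˢ Set.univ))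
    (hdensity : ∀ t ∈ Set.Icc (0:ℝ) T, ∀ A : Set (Fin d → ℝ), MeasurableSet A →
      (volume.withDensity fun y => ENNReal.ofReal (p₀ y)) (Φ t ⁻¹' A)
        = ∫⁻ y in A, ENNReal.ofReal (p t y)) :
    ∀ x : Fin d → ℝ, ∀ t ∈ Set.Icc (0:ℝ) T,
      HasDerivWithinAt (fun s => Real.log (p s (Φ s x)))
        (-(∑ k, fderiv ℝ (fun y => f t y k) (Φ t x) (Pi.single k 1)))
        (Set.Icc 0 T) t :=
  instantaneous_change_of_variables_general T hT d f hf Φ hΦ hflow hbij hjac p₀ hp₀pos hp₀cont p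
    hppos hpcont hdensity
end

section
/- Let T > 0 and let a < b < c be real numbers. There do not exist: a function f : ℝ × ℝ → ℝ that is continuous in its first argument and uniformly Lipschitz in its second argument, differentiable functions y_a, y_b, y_c : [0,T] → ℝ with y_a(0) = a, y_b(0) = b, y_c(0) = c and y'(t) = f(t, y(t)) for each of them on [0,T], and an affine map ℓ : ℝ → ℝ, such that ℓ(y_a(T)) < 0, ℓ(y_c(T)) < 0 and ℓ(y_b(T)) > 0. (An unaugmented one-dimensional neural ODE followed by an affine readout cannot linearly separate {a, c} from {b}.) -/
/-!
In one dimension, two solutions of a Lipschitz ODE that start in a given order can never cross: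
if they met at some time, uniqueness of solutions run backwards from that time would force them
to agree at time `0`. So the flow is increasing, the outputs satisfy `y_a(T) < y_b(T) < y_c(T)`,
and an affine map, being monotone, cannot be negative at both outer points and positive at the
middle one.
-/

open Set

lemma lipschitzWith_of_abs_sub_le {g : ℝ → ℝ} {C : ℝ} (h : ∀ x y, |g x - g y| ≤ C * |x - y|) :
    LipschitzWith C.toNNReal g :=
  LipschitzWith.of_dist_le_mul fun x y => by
    rw [Real.dist_eq, Real.dist_eq, Real.coe_toNNReal']
    exact (h x y).trans (mul_le_mul_of_nonneg_right (le_max_left C 0) (abs_nonneg _))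

section ScalarODE

variable {f : ℝ → ℝ → ℝ} {K : NNReal} {y z : ℝ → ℝ} {t₀ t₁ : ℝ}

theorem eqOn_Icc_of_hasDerivWithinAt_of_eq (hf : ∀ t, LipschitzWith K (f t))
    (hy : ∀ t ∈ Icc t₀ t₁, HasDerivWithinAt y (f t (y t)) (Icc t₀ t₁) t)
    (hz : ∀ t ∈ Icc t₀ t₁, HasDerivWithinAt z (f t (z t)) (Icc t₀ t₁) t)
    {s : ℝ} (hs : s ∈ Icc t₀ t₁) (hyz : y s = z s) :
    EqOn y z (Icc t₀ s) := by
  have hsub : Icc t₀ s ⊆ Icc t₀ t₁ := Icc_subset_Icc_right hs.2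
  have hleft : ∀ u : ℝ → ℝ, (∀ t ∈ Icc t₀ t₁, HasDerivWithinAt u (f t (u t)) (Icc t₀ t₁) t) →
      ∀ t ∈ Ioc t₀ s, HasDerivWithinAt u (f t (u t)) (Iic t) t := fun u hu t ht =>
    (hu t (hsub (Ioc_subset_Icc_self ht))).mono_of_mem_nhdsWithin <|
      Filter.mem_of_superset (Icc_mem_nhdsLE ht.1) (Icc_subset_Icc_right (ht.2.trans hs.2))
  have hcont : ∀ u : ℝ → ℝ, (∀ t ∈ Icc t₀ t₁, HasDerivWithinAt u (f t (u t)) (Icc t₀ t₁) t) →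
      ContinuousOn u (Icc t₀ s) := fun u hu t ht =>
    (hu t (hsub ht)).continuousWithinAt.mono hsub
  exact ODE_solution_unique_of_mem_Icc_left (s := fun _ => univ)
    (fun t _ => (hf t).lipschitzOnWith) (hcont y hy) (hleft y hy) (fun _ _ => mem_univ _)
    (hcont z hz) (hleft z hz) (fun _ _ => mem_univ _) hyz

theorem lt_of_hasDerivWithinAt_of_lt (hf : ∀ t, LipschitzWith K (f t))
    (hy : ∀ t ∈ Icc t₀ t₁, HasDerivWithinAt y (f t (y t)) (Icc t₀ t₁) t)
    (hz : ∀ t ∈ Icc t₀ t₁, HasDerivWithinAt z (f t (z t)) (Icc t₀ t₁) t)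
    (h₀ : y t₀ < z t₀) {t : ℝ} (ht : t ∈ Icc t₀ t₁) : y t < z t := by
  by_contra! hzy
  have hcont : ContinuousOn (z - y) (Icc t₀ t) := fun s hs =>
    ((hz s ⟨hs.1, hs.2.trans ht.2⟩).continuousWithinAt.sub
      (hy s ⟨hs.1, hs.2.trans ht.2⟩).continuousWithinAt).mono (Icc_subset_Icc_right ht.2)
  obtain ⟨s, hs, hmeet⟩ : ∃ s ∈ Icc t₀ t, (z - y) s = 0 :=
    intermediate_value_Icc' ht.1 hcont ⟨by simpa using hzy, by simpa using h₀.le⟩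
  have hmeet' : y s = z s := (sub_eq_zero.mp hmeet).symm
  exact h₀.ne <| eqOn_Icc_of_hasDerivWithinAt_of_eq hf hy hz ⟨hs.1, hs.2.trans ht.2⟩ hmeet'
    (left_mem_Icc.mpr hs.1)

end ScalarODE

lemma mul_add_neg_of_le_of_le {w v x y z : ℝ} (hx : w * x + v < 0) (hz : w * z + v < 0)
    (hxy : x ≤ y) (hyz : y ≤ z) : w * y + v < 0 := by
  rcases le_total w 0 with hw | hw <;> nlinarith

/-- **An unaugmented one-dimensional neural ODE followed by an affine readout cannot
linearly separate `{a, c}` from `{b}`** when `a < b < c`: there is no time-dependent vector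
field (continuous in time, uniformly Lipschitz in space), solutions started at `a`, `b`, `c`,
and affine map `ℓ(x) = w x + v` with `ℓ(y_a(T)) < 0`, `ℓ(y_c(T)) < 0` and `ℓ(y_b(T)) > 0`. -/
theorem no_affine_separation_of_unaugmented_node
    (T : ℝ) (hT : 0 < T) (a b c : ℝ) (hab : a < b) (hbc : b < c) :
    ¬ ∃ (f : ℝ → ℝ → ℝ) (ya yb yc : ℝ → ℝ) (w v : ℝ),
      (∀ y, Continuous fun t => f t y) ∧
      (∃ C > 0, ∀ t y₁ y₂, |f t y₁ - f t y₂| ≤ C * |y₁ - y₂|) ∧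
      ya 0 = a ∧ yb 0 = b ∧ yc 0 = c ∧
      (∀ t ∈ Set.Icc (0:ℝ) T, HasDerivWithinAt ya (f t (ya t)) (Set.Icc 0 T) t) ∧
      (∀ t ∈ Set.Icc (0:ℝ) T, HasDerivWithinAt yb (f t (yb t)) (Set.Icc 0 T) t) ∧
      (∀ t ∈ Set.Icc (0:ℝ) T, HasDerivWithinAt yc (f t (yc t)) (Set.Icc 0 T) t) ∧
      w * ya T + v < 0 ∧ w * yc T + v < 0 ∧ 0 < w * yb T + v := by
  rintro ⟨f, ya, yb, yc, w, v, -, ⟨C, -, hlip⟩, ha0, hb0, hc0, hya, hyb, hyc, hℓa, hℓc, hℓb⟩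
  have hf : ∀ t, LipschitzWith C.toNNReal (f t) := fun t => lipschitzWith_of_abs_sub_le (hlip t)
  have hTmem : T ∈ Icc 0 T := right_mem_Icc.mpr hT.le
  have hab' : ya T < yb T :=
    lt_of_hasDerivWithinAt_of_lt hf hya hyb (by rwa [ha0, hb0]) hTmem
  have hbc' : yb T < yc T :=
    lt_of_hasDerivWithinAt_of_lt hf hyb hyc (by rwa [hb0, hc0]) hTmem
  exact hℓb.not_gt (mul_add_neg_of_le_of_le hℓa hℓc hab'.le hbc'.le)
end

section
/- Fix T > 0 and d, d_l, d_o ∈ ℕ with d_l ≥ d + d_o. For every continuous F : ℝ^d → ℝ^{d_o}, every compact K ⊆ ℝ^d and every ε > 0, there exist a Lipschitz continuous function f : ℝ × ℝ^{d_l} → ℝ^{d_l}, an affine map ℓ₁ : ℝ^d → ℝ^{d_l} and an affine map ℓ₂ : ℝ^{d_l} → ℝ^{d_o} such that for every x ∈ K, the (unique) differentiable solution y_x : [0,T] → ℝ^{d_l} of y_x(0) = ℓ₁(x), y_x'(t) = f(t, y_x(t)) for t ∈ [0,T] satisfies ‖F(x) − ℓ₂(y_x(T))‖ < ε. (Augmented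 neural ODEs with Lipschitz vector fields, composed with affine maps, are universal approximators of continuous functions, uniformly on compact sets.) -/
/-!
Approximate `F` on `K` by a globally Lipschitz `G` (a smooth approximation of `F`, cut off by
a bump function equal to `1` on `K`). Embed `ℝ^d × ℝ^{d_o}` linearly into `ℝ^{d_l}` with a linear
left inverse. The autonomous field which, in these coordinates, is `(x, z) ↦ (0, G x / T)` never
moves the first block, so from `(x, 0)` its solution is the straight line reaching `(x, G x)` at
time `T`; reading off the second block gives `G x`, and Lipschitz uniqueness shows that every
solution does the same.
-/

open Set Metric Function

theorem Continuous.exists_lipschitzWith_dist_lt_on_isCompact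
    {E F : Type*} [NormedAddCommGroup E] [NormedSpace ℝ E] [FiniteDimensional ℝ E]
    [NormedAddCommGroup F] [NormedSpace ℝ F] {f : E → F} (hf : Continuous f)
    {K : Set E} (hK : IsCompact K) {ε : ℝ} (hε : 0 < ε) :
    ∃ (C : NNReal) (g : E → F), LipschitzWith C g ∧ ∀ x ∈ K, dist (g x) (f x) < ε := by
  obtain ⟨g, hg_smooth, hgf, -⟩ :=
    hf.exists_contDiff_approx 1 continuous_const (fun _ => hε)
  obtain ⟨R, hKR⟩ := hK.isBounded.subset_closedBall 0
  let χ : ContDiffBump (0 : E) := ⟨max R 1, max R 1 + 1, by positivity, lt_add_one _⟩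
  obtain ⟨C, hC⟩ := ContDiff.lipschitzWith_of_hasCompactSupport (f := fun x => χ x • g x)
    (χ.hasCompactSupport.smul_right) (χ.contDiff.smul hg_smooth) one_ne_zero
  refine ⟨C, _, hC, fun x hx => ?_⟩
  have hχx : χ x = 1 :=
    χ.one_of_mem_closedBall (closedBall_subset_closedBall (le_max_left _ _) (hKR hx))
  simpa [hχx] using hgf x

theorem exists_continuousLinearMap_leftInverse_of_finrank_le
    {𝕜 V W : Type*} [NontriviallyNormedField 𝕜] [CompleteSpace 𝕜]
    [NormedAddCommGroup V] [NormedSpace 𝕜 V] [FiniteDimensional 𝕜 V]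
    [NormedAddCommGroup W] [NormedSpace 𝕜 W] [FiniteDimensional 𝕜 W]
    (h : Module.finrank 𝕜 V ≤ Module.finrank 𝕜 W) :
    ∃ (φ : V →L[𝕜] W) (ψ : W →L[𝕜] V), LeftInverse ψ φ := by
  obtain ⟨φ, hφ⟩ := finrank_le_iff_exists_linearMap.1 h
  obtain ⟨ψ, hψφ⟩ := φ.exists_leftInverse_of_injective (LinearMap.ker_eq_bot.2 hφ)
  exact ⟨φ.toContinuousLinearMap, ψ.toContinuousLinearMap, LinearMap.congr_fun hψφ⟩

theorem ODE_solution_unique_of_hasDerivWithinAt_Icc {W : Type*} [NormedAddCommGroup W]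
    [NormedSpace ℝ W] {v : ℝ → W → W} {K : NNReal} (hv : ∀ t, LipschitzWith K (v t))
    {a b : ℝ} {f g : ℝ → W}
    (hf : ∀ t ∈ Icc a b, HasDerivWithinAt f (v t (f t)) (Icc a b) t)
    (hg : ∀ t ∈ Icc a b, HasDerivWithinAt g (v t (g t)) (Icc a b) t)
    (ha : f a = g a) : EqOn f g (Icc a b) :=
  ODE_solution_unique hv (fun t ht => (hf t ht).continuousWithinAt)
    (fun t ht => (hf t (Ico_subset_Icc_self ht)).mono_of_mem_nhdsWithin
      (Icc_mem_nhdsGE_of_mem ht))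
    (fun t ht => (hg t ht).continuousWithinAt)
    (fun t ht => (hg t (Ico_subset_Icc_self ht)).mono_of_mem_nhdsWithin
      (Icc_mem_nhdsGE_of_mem ht)) ha

section AugmentedField

variable {E F W : Type*} [NormedAddCommGroup E] [NormedSpace ℝ E] [NormedAddCommGroup F]
  [NormedSpace ℝ F] [NormedAddCommGroup W] [NormedSpace ℝ W]

noncomputable def augmentedField (φ : E × F →L[ℝ] W) (ψ : W →L[ℝ] E × F) (g : E → F) (T : ℝ)
    (w : W) : W :=
  T⁻¹ • φ (0, g (ψ w).1)

namespace augmentedField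

variable {φ : E × F →L[ℝ] W} {ψ : W →L[ℝ] E × F} {g : E → F} {T : ℝ}

theorem exists_lipschitzWith {C : NNReal} (hg : LipschitzWith C g) :
    ∃ L, LipschitzWith L (augmentedField φ ψ g T) :=
  ⟨_, (lipschitzWith_smul T⁻¹).comp <| (φ ∘L .inr ℝ E F).lipschitz.comp <|
    hg.comp (ContinuousLinearMap.fst ℝ E F ∘L ψ).lipschitz⟩

theorem fst_apply_self (hψφ : LeftInverse ψ φ) (w : W) :
    (ψ (augmentedField φ ψ g T w)).1 = 0 := by
  simp [augmentedField, hψφ _]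

theorem add_smul_self (hψφ : LeftInverse ψ φ) (w u : W) (t : ℝ) :
    augmentedField φ ψ g T (w + t • augmentedField φ ψ g T u) =
      augmentedField φ ψ g T w := by
  rw [augmentedField, map_add, map_smul, Prod.fst_add, Prod.smul_fst, fst_apply_self hψφ,
    smul_zero, add_zero, augmentedField]

theorem hasDerivAt_add_smul_self (hψφ : LeftInverse ψ φ) (w : W) (t : ℝ) :
    HasDerivAt (fun s : ℝ => w + s • augmentedField φ ψ g T w)
      (augmentedField φ ψ g T (w + t • augmentedField φ ψ g T w)) t := by
  rw [add_smul_self hψφ]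
  simpa using ((hasDerivAt_id t).smul_const (augmentedField φ ψ g T w)).const_add w

theorem snd_apply_add_smul_self (hψφ : LeftInverse ψ φ) (hT : T ≠ 0) (x : E) :
    (ψ (φ (x, 0) + T • augmentedField φ ψ g T (φ (x, 0)))).2 = g x := by
  simp [augmentedField, hψφ _, hT]

end augmentedField

end AugmentedField

/-- **Universal approximation with augmented neural ODEs (Lipschitz vector fields).**
For `d_l ≥ d + d_o`, every continuous `F : ℝ^d → ℝ^{d_o}` can be approximated uniformly on
a compact set, to accuracy `ε`, by a model consisting of an affine lift `ℓ₁ : ℝ^d → ℝ^{d_l}`,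
the time-`T` solution map of an ODE with Lipschitz vector field
`f : ℝ × ℝ^{d_l} → ℝ^{d_l}`, and an affine readout `ℓ₂ : ℝ^{d_l} → ℝ^{d_o}`. -/
theorem augmented_neural_ode_universal_approximation
    (T : ℝ) (hT : 0 < T) (d dl dO : ℕ) (hdl : d + dO ≤ dl)
    (F : EuclideanSpace ℝ (Fin d) → EuclideanSpace ℝ (Fin dO)) (hF : Continuous F)
    (K : Set (EuclideanSpace ℝ (Fin d))) (hK : IsCompact K) (ε : ℝ) (hε : 0 < ε) :
    ∃ (f : ℝ → EuclideanSpace ℝ (Fin dl) → EuclideanSpace ℝ (Fin dl)) (C : NNReal)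
      (ℓ₁ : EuclideanSpace ℝ (Fin d) →ᵃ[ℝ] EuclideanSpace ℝ (Fin dl))
      (ℓ₂ : EuclideanSpace ℝ (Fin dl) →ᵃ[ℝ] EuclideanSpace ℝ (Fin dO)),
      LipschitzWith C (Function.uncurry f) ∧
      (∀ x ∈ K, ∃ y : ℝ → EuclideanSpace ℝ (Fin dl),
        y 0 = ℓ₁ x ∧
        ∀ t ∈ Set.Icc (0:ℝ) T, HasDerivWithinAt y (f t (y t)) (Set.Icc 0 T) t) ∧
      ∀ x ∈ K, ∀ y : ℝ → EuclideanSpace ℝ (Fin dl),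
        y 0 = ℓ₁ x →
        (∀ t ∈ Set.Icc (0:ℝ) T, HasDerivWithinAt y (f t (y t)) (Set.Icc 0 T) t) →
        ‖F x - ℓ₂ (y T)‖ < ε := by
  obtain ⟨C, G, hG, hGF⟩ := hF.exists_lipschitzWith_dist_lt_on_isCompact hK hε
  obtain ⟨φ, ψ, hψφ⟩ := exists_continuousLinearMap_leftInverse_of_finrank_le (𝕜 := ℝ)
    (V := EuclideanSpace ℝ (Fin d) × EuclideanSpace ℝ (Fin dO))
    (W := EuclideanSpace ℝ (Fin dl)) (by simpa [Module.finrank_prod] using hdl)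
  set V := augmentedField φ ψ G T
  obtain ⟨L, hV⟩ := augmentedField.exists_lipschitzWith (φ := φ) (ψ := ψ) (T := T) hG
  have hsol (x) (t : ℝ) (_ : t ∈ Icc 0 T) :
      HasDerivWithinAt (fun s : ℝ => φ (x, 0) + s • V (φ (x, 0)))
        (V (φ (x, 0) + t • V (φ (x, 0)))) (Icc 0 T) t :=
    (augmentedField.hasDerivAt_add_smul_self hψφ _ t).hasDerivWithinAt
  refine ⟨fun _ => V, L * 1, (φ ∘L .inl ℝ _ _).toAffineMap,
    (.snd ℝ _ _ ∘L ψ).toAffineMap, hV.comp LipschitzWith.prod_snd,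
    fun x _ => ⟨_, by simp, hsol x⟩, fun x hx y hy0 hy => ?_⟩
  have hyT : y T = φ (x, 0) + T • V (φ (x, 0)) :=
    ODE_solution_unique_of_hasDerivWithinAt_Icc (fun _ => hV) hy (hsol x) (by simpa using hy0)
      ⟨hT.le, le_rfl⟩
  have hread : (ψ (y T)).2 = G x := hyT ▸ augmentedField.snd_apply_add_smul_self hψφ hT.ne' x
  simpa [hread, dist_eq_norm, norm_sub_rev] using hGF x hx
end

section
/- Fix T > 0 and d, d_o ∈ ℕ. There exists a family of continuous functions f_m : ℝ^m → ℝ^m, one for each m ∈ ℕ, such that: (i) for every m and every initial value y₀ ∈ ℝ^m, the initial value problem y(0) = y₀, y'(t) = f_m(y(t)) for t ∈ [0,T] has a unique differentiable solution; and (ii) for every continuous F : ℝ^d → ℝ^{d_o}, every compact K ⊆ ℝ^d and every ε > 0, there exist m ∈ ℕ, an affine map ℓ₁ : ℝ^d → ℝ^m and an affine map ℓ₂ : ℝ^m → ℝ^{d_o} such that for every x ∈ K, the unique solution y_x of y_x(0) = ℓ₁(x), y_x'(t) = f_m(y_x(t)) satisfies ‖F(x) − ℓ₂(y_x(T))‖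 < ε. (Augmented neural ODEs are universal approximators even when the vector field in each dimension is a single fixed continuous function, i.e. not itself a universal approximator.) -/
/-!
In dimension `m` the vector field freezes the even coordinates and lets each odd coordinate
`2k+1` grow at the rate given by coordinate `2k`, i.e. `y₂ₖ' = 0`, `y₂ₖ₊₁' = y₂ₖ y₂ₖ₊₁`. Its flow
is explicit, `y₂ₖ₊₁(T) = y₂ₖ₊₁(0) exp (T y₂ₖ(0))`, and, being polynomial, the field is locally
Lipschitz, so solutions are unique. Starting from `y₂ₖ(0) = φₖ(x)/T`, `y₂ₖ₊₁(0) = 1`, which is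
affine in `x`, the state at time `T` holds the features `exp (φₖ x)`, and an affine readout forms
`∑ₖ exp (φₖ x) • aₖ`. Such sums approximate every continuous map uniformly on compacta: the
exponentials of affine functions are closed under products and separate points, so their span
is a point-separating subalgebra and Stone–Weierstrass applies coordinatewise.
-/

open Set Real

theorem ODE_solution_unique_Icc_of_locallyLipschitz {E : Type*} [NormedAddCommGroup E]
    [NormedSpace ℝ E] {v : E → E} (hv : LocallyLipschitz v) {a b : ℝ} {y z : ℝ → E}
    (hy : ∀ t ∈ Icc a b, HasDerivWithinAt y (v (y t)) (Icc a b) t)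
    (hz : ∀ t ∈ Icc a b, HasDerivWithinAt z (v (z t)) (Icc a b) t) (h : y a = z a) :
    EqOn y z (Icc a b) := by
  have hyc : ContinuousOn y (Icc a b) := fun t ht => (hy t ht).continuousWithinAt
  have hzc : ContinuousOn z (Icc a b) := fun t ht => (hz t ht).continuousWithinAt
  obtain ⟨K, hK⟩ := hv.locallyLipschitzOn.exists_lipschitzOnWith_of_compact
    ((isCompact_Icc.image_of_continuousOn hyc).union (isCompact_Icc.image_of_continuousOn hzc))
  have hright {w : ℝ → E} (hw : ∀ t ∈ Icc a b, HasDerivWithinAt w (v (w t)) (Icc a b) t)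
      (t : ℝ) (ht : t ∈ Ico a b) : HasDerivWithinAt w (v (w t)) (Ici t) t :=
    (hw t (Ico_subset_Icc_self ht)).mono_of_mem_nhdsWithin (Icc_mem_nhdsGE_of_mem ht)
  exact ODE_solution_unique_of_mem_Icc_right (fun _ _ => hK) hyc (hright hy)
    (fun t ht => .inl (mem_image_of_mem y (Ico_subset_Icc_self ht))) hzc (hright hz)
    (fun t ht => .inr (mem_image_of_mem z (Ico_subset_Icc_self ht))) h

noncomputable section

variable {E : Type*} [TopologicalSpace E] [AddCommGroup E] [Module ℝ E]

def expAffine (φ : E →ᴬ[ℝ] ℝ) : C(E, ℝ) :=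
  ⟨fun x => exp (φ x), continuous_exp.comp φ.continuous⟩

variable (E) in
def expAffineSubmonoid : Submonoid C(E, ℝ) where
  carrier := range expAffine
  one_mem' := ⟨0, by ext; simp [expAffine]⟩
  mul_mem' := by
    rintro _ _ ⟨φ, rfl⟩ ⟨ψ, rfl⟩
    exact ⟨φ + ψ, by ext; simp [expAffine, exp_add]⟩

theorem separatesPoints_adjoin_expAffineSubmonoid [SeparatingDual ℝ E] :
    (Algebra.adjoin ℝ (expAffineSubmonoid E : Set C(E, ℝ))).SeparatesPoints := by
  intro x y hxy
  obtain ⟨ℓ, hℓ⟩ := SeparatingDual.exists_separating_of_ne (R := ℝ) hxy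
  refine ⟨_, ⟨expAffine ℓ.toContinuousAffineMap, Algebra.subset_adjoin ⟨_, rfl⟩, rfl⟩, ?_⟩
  simpa [expAffine] using hℓ

theorem exists_mem_span_expAffine_near [SeparatingDual ℝ E] (G : C(E, ℝ)) {K : Set E}
    (hK : IsCompact K) {ε : ℝ} (hε : 0 < ε) :
    ∃ g ∈ Submodule.span ℝ (range (expAffine (E := E))), ∀ x ∈ K, ‖g x - G x‖ < ε := by
  obtain ⟨g, hg, hgG⟩ :=
    ContinuousMap.exists_mem_subalgebra_near_continuous_of_isCompact_of_separatesPoints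
      separatesPoints_adjoin_expAffineSubmonoid G hK hε
  refine ⟨g, ?_, hgG⟩
  have : g ∈ Subalgebra.toSubmodule (Algebra.adjoin ℝ (expAffineSubmonoid E : Set C(E, ℝ))) := hg
  rwa [Algebra.adjoin_eq_span, Submonoid.closure_eq] at this

variable (E) (F : Type*) [NormedAddCommGroup F] [NormedSpace ℝ F]

def expSmulSpan : Submodule ℝ (E → F) :=
  Submodule.span ℝ (range fun p : (E →ᴬ[ℝ] ℝ) × F => fun x => exp (p.1 x) • p.2)

variable {E F}

theorem smul_const_mem_expSmulSpan {g : C(E, ℝ)}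
    (hg : g ∈ Submodule.span ℝ (range (expAffine (E := E)))) (a : F) :
    (fun x => g x • a) ∈ expSmulSpan E F := by
  induction hg using Submodule.span_induction with
  | mem g hg =>
    obtain ⟨φ, rfl⟩ := hg
    exact Submodule.subset_span ⟨(φ, a), rfl⟩
  | zero => simpa [Pi.zero_def] using (expSmulSpan E F).zero_mem
  | add g h _ _ hg hh => convert (expSmulSpan E F).add_mem hg hh using 1; ext; simp [add_smul]
  | smul r g _ hg => convert (expSmulSpan E F).smul_mem r hg using 1; ext; simp [mul_smul]

theorem exists_eq_sum_of_mem_expSmulSpan {g : E → F} (hg : g ∈ expSmulSpan E F) :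
    ∃ (n : ℕ) (φ : Fin n → E →ᴬ[ℝ] ℝ) (a : Fin n → F), g = fun x => ∑ i, exp (φ i x) • a i := by
  obtain ⟨n, r, p, rfl⟩ := Submodule.mem_span_set'.1 hg
  choose q hq using fun i => (p i).2
  refine ⟨n, fun i => (q i).1, fun i => r i • (q i).2, ?_⟩
  ext x
  simp [← hq, smul_comm (r _)]

theorem exists_mem_expSmulSpan_near [SeparatingDual ℝ E] [FiniteDimensional ℝ F] {G : E → F}
    (hG : Continuous G) {K : Set E} (hK : IsCompact K) {ε : ℝ} (hε : 0 < ε) :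
    ∃ g ∈ expSmulSpan E F, ∀ x ∈ K, ‖G x - g x‖ < ε := by
  let b := Module.finBasis ℝ F
  set S := ∑ c, ‖b c‖
  have hS : 0 ≤ S := by positivity
  have hδ : 0 < ε / (S + 1) := by positivity
  have hcoord (c) : ∃ g ∈ Submodule.span ℝ (range (expAffine (E := E))),
      ∀ x ∈ K, ‖g x - b.coord c (G x)‖ < ε / (S + 1) :=
    exists_mem_span_expAffine_near ⟨_, (b.coord c).continuous_of_finiteDimensional.comp hG⟩ hK hδ
  choose g hg hgG using hcoord
  refine ⟨fun x => ∑ c, g c x • b c, ?_, fun x hx => ?_⟩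
  · convert (expSmulSpan E F).sum_mem (t := Finset.univ)
      fun c _ => smul_const_mem_expSmulSpan (hg c) (b c) using 1
    ext; simp [Finset.sum_apply]
  calc ‖G x - ∑ c, g c x • b c‖ = ‖∑ c, (b.coord c (G x) - g c x) • b c‖ := by
        simp [sub_smul, b.sum_repr]
    _ ≤ ∑ c, ‖b.coord c (G x) - g c x‖ * ‖b c‖ :=
        (norm_sum_le _ _).trans (Finset.sum_le_sum fun c _ => (norm_smul _ _).le)
    _ ≤ ∑ c, ε / (S + 1) * ‖b c‖ := by
        gcongr with c
        rw [norm_sub_rev]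
        exact (hgG c x hx).le
    _ < ε := by
        rw [← Finset.mul_sum, div_mul_eq_mul_div, div_lt_iff₀ (by positivity)]
        nlinarith

theorem exists_sum_exp_smul_near [SeparatingDual ℝ E] [FiniteDimensional ℝ F] {G : E → F}
    (hG : Continuous G) {K : Set E} (hK : IsCompact K) {ε : ℝ} (hε : 0 < ε) :
    ∃ (n : ℕ) (φ : Fin n → E →ᴬ[ℝ] ℝ) (a : Fin n → F),
      ∀ x ∈ K, ‖G x - ∑ i, exp (φ i x) • a i‖ < ε := by
  obtain ⟨g, hg, hgG⟩ := exists_mem_expSmulSpan_near hG hK hε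
  obtain ⟨n, φ, a, rfl⟩ := exists_eq_sum_of_mem_expSmulSpan hg
  exact ⟨n, φ, a, hgG⟩

end

namespace AugmentedNeuralODE

variable {m : ℕ}

def rate (y : EuclideanSpace ℝ (Fin m)) (j : Fin m) : ℝ :=
  if j.val % 2 = 1 then y ⟨j - 1, by omega⟩ else 0

def vectorField (m : ℕ) (y : EuclideanSpace ℝ (Fin m)) : EuclideanSpace ℝ (Fin m) :=
  WithLp.toLp 2 fun j => rate y j * y j

noncomputable def flow (y₀ : EuclideanSpace ℝ (Fin m)) (t : ℝ) : EuclideanSpace ℝ (Fin m) :=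
  WithLp.toLp 2 fun j => y₀ j * exp (rate y₀ j * t)

theorem contDiff_vectorField : ContDiff ℝ 1 (vectorField m) := by
  refine contDiff_piLp' 2 fun j => ?_
  simp only [vectorField, rate, PiLp.toLp_apply]
  split_ifs <;> fun_prop

theorem rate_flow (y₀ : EuclideanSpace ℝ (Fin m)) (t : ℝ) : rate (flow y₀ t) = rate y₀ := by
  funext j
  unfold rate flow
  split_ifs with hj
  · simp [rate, show ¬ (j.val - 1) % 2 = 1 by omega]
  · rfl

theorem flow_zero (y₀ : EuclideanSpace ℝ (Fin m)) : flow y₀ 0 = y₀ := by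
  ext j
  simp [flow]

theorem hasDerivAt_flow (y₀ : EuclideanSpace ℝ (Fin m)) (t : ℝ) :
    HasDerivAt (flow y₀) (vectorField m (flow y₀ t)) t := by
  have hcoord : ∀ j, HasDerivAt (fun s => y₀ j * exp (rate y₀ j * s))
      (rate y₀ j * (y₀ j * exp (rate y₀ j * t))) t := fun j =>
    (((hasDerivAt_id t).const_mul (rate y₀ j)).exp.const_mul (y₀ j)).congr_deriv
      (by simp only [id, mul_one]; ring)
  have := (PiLp.hasStrictFDerivAt_toLp (𝕜 := ℝ) 2 _).hasFDerivAt.comp_hasDerivAt t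
    (hasDerivAt_pi.2 hcoord)
  rwa [vectorField, rate_flow]

theorem eqOn_flow {T : ℝ} {y : ℝ → EuclideanSpace ℝ (Fin m)}
    (hy : ∀ t ∈ Icc 0 T, HasDerivWithinAt y (vectorField m (y t)) (Icc 0 T) t) :
    EqOn y (flow (y 0)) (Icc 0 T) :=
  ODE_solution_unique_Icc_of_locallyLipschitz contDiff_vectorField.locallyLipschitz hy
    (fun t _ => (hasDerivAt_flow _ t).hasDerivWithinAt) (flow_zero _).symm

variable {E F : Type*} [AddCommGroup E] [Module ℝ E] [NormedAddCommGroup F] [NormedSpace ℝ F]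
  {n : ℕ}

def oddIdx (k : Fin n) : Fin (2 * n) := ⟨2 * k + 1, by omega⟩

noncomputable def lift (T : ℝ) (φ : Fin n → E →ᵃ[ℝ] ℝ) :
    E →ᵃ[ℝ] EuclideanSpace ℝ (Fin (2 * n)) :=
  (EuclideanSpace.equiv (Fin (2 * n)) ℝ).symm.toLinearEquiv.toLinearMap.toAffineMap.comp
    (AffineMap.pi fun j =>
      if j.val % 2 = 1 then AffineMap.const ℝ E 1 else T⁻¹ • φ ⟨j / 2, by omega⟩)

noncomputable def readout (a : Fin n → F) : EuclideanSpace ℝ (Fin (2 * n)) →ᵃ[ℝ] F :=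
  (∑ k, (EuclideanSpace.proj (oddIdx k)).smulRight (a k) :
    EuclideanSpace ℝ (Fin (2 * n)) →L[ℝ] F).toLinearMap.toAffineMap

theorem flow_lift_oddIdx {T : ℝ} (hT : T ≠ 0) (φ : Fin n → E →ᵃ[ℝ] ℝ) (x : E) (k : Fin n) :
    flow (lift T φ x) T (oddIdx k) = exp (φ k x) := by
  simp [flow, rate, lift, oddIdx, mul_right_comm _ _ T, inv_mul_cancel₀ hT]

theorem readout_flow_lift {T : ℝ} (hT : T ≠ 0) (φ : Fin n → E →ᵃ[ℝ] ℝ) (a : Fin n → F)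
    (x : E) : readout a (flow (lift T φ x) T) = ∑ k, exp (φ k x) • a k := by
  simp [readout, flow_lift_oddIdx hT]

end AugmentedNeuralODE

open AugmentedNeuralODE in
/-- **Augmented neural ODEs are universal approximators even when the vector field is not.**
There is a fixed family of continuous autonomous vector fields `f m : ℝ^m → ℝ^m`, one for
each dimension `m`, whose initial value problems on `[0,T]` have (existing and unique)
solutions, such that every continuous `F : ℝ^d → ℝ^{d_o}` can be approximated uniformly on
any compact set to any accuracy by an affine lift into some `ℝ^m`, the time-`T` solution map
of `y' = f m (y)`, and an affine readout. -/
theorem augmented_neural_ode_universal_with_fixed_vector_fields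
    (T : ℝ) (hT : 0 < T) (d dO : ℕ) :
    ∃ f : (m : ℕ) → EuclideanSpace ℝ (Fin m) → EuclideanSpace ℝ (Fin m),
      (∀ m, Continuous (f m)) ∧
      (∀ (m : ℕ) (y₀ : EuclideanSpace ℝ (Fin m)), ∃ y : ℝ → EuclideanSpace ℝ (Fin m),
        y 0 = y₀ ∧
        ∀ t ∈ Set.Icc (0:ℝ) T, HasDerivWithinAt y (f m (y t)) (Set.Icc 0 T) t) ∧
      (∀ (m : ℕ) (y z : ℝ → EuclideanSpace ℝ (Fin m)),
        y 0 = z 0 →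
        (∀ t ∈ Set.Icc (0:ℝ) T, HasDerivWithinAt y (f m (y t)) (Set.Icc 0 T) t) →
        (∀ t ∈ Set.Icc (0:ℝ) T, HasDerivWithinAt z (f m (z t)) (Set.Icc 0 T) t) →
        ∀ t ∈ Set.Icc (0:ℝ) T, y t = z t) ∧
      ∀ F : EuclideanSpace ℝ (Fin d) → EuclideanSpace ℝ (Fin dO), Continuous F →
        ∀ K : Set (EuclideanSpace ℝ (Fin d)), IsCompact K →
          ∀ ε : ℝ, 0 < ε →
            ∃ (m : ℕ) (ℓ₁ : EuclideanSpace ℝ (Fin d) →ᵃ[ℝ] EuclideanSpace ℝ (Fin m))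
              (ℓ₂ : EuclideanSpace ℝ (Fin m) →ᵃ[ℝ] EuclideanSpace ℝ (Fin dO)),
              ∀ x ∈ K, ∀ y : ℝ → EuclideanSpace ℝ (Fin m),
                y 0 = ℓ₁ x →
                (∀ t ∈ Set.Icc (0:ℝ) T, HasDerivWithinAt y (f m (y t)) (Set.Icc 0 T) t) →
                ‖F x - ℓ₂ (y T)‖ < ε := by
  refine ⟨vectorField, fun m => contDiff_vectorField.continuous,
    fun m y₀ => ⟨flow y₀, flow_zero y₀, fun t _ => (hasDerivAt_flow y₀ t).hasDerivWithinAt⟩,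
    fun m y z h0 hy hz t ht => by rw [eqOn_flow hy ht, eqOn_flow hz ht, h0], ?_⟩
  intro F hF K hK ε hε
  obtain ⟨n, φ, a, hφa⟩ := exists_sum_exp_smul_near hF hK hε
  refine ⟨2 * n, lift T fun k => φ k, readout a, fun x hx y hy0 hy => ?_⟩
  rw [eqOn_flow hy ⟨hT.le, le_rfl⟩, hy0, readout_flow_lift hT.ne']
  exact hφa x hx
end

section
/- Let d ∈ ℕ, let D ∈ ℝ^{d×d} be a diagonal matrix with strictly positive diagonal entries, and let W ∈ ℝ^{d×d} be antisymmetric (Wᵀ = −W). Then every complex eigenvalue of the product DW is purely imaginary: for every μ in the spectrum of the complexification of DW, the real part of μ is zero. -/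
open Matrix

/-! With `S = √D`, the matrix `D W = S (S W)` has the same nonzero eigenvalues as
`(S W) S = S W S`, which is skew-Hermitian; multiplying by `i` makes it Hermitian, so its
eigenvalues are `i` times real numbers. -/

namespace Matrix

variable {n : Type*}

theorem re_eq_zero_of_mem_spectrum_of_conjTranspose_eq_neg [Fintype n] [DecidableEq n]
    {M : Matrix n n ℂ} (hM : Mᴴ = -M) {μ : ℂ} (hμ : μ ∈ spectrum ℂ M) : μ.re = 0 := by
  have hIM : (Complex.I • M).IsHermitian := by
    rw [IsHermitian, conjTranspose_smul, hM, Complex.star_def, Complex.conj_I, smul_neg, neg_smul,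
      neg_neg]
  have hIμ : Complex.I * μ ∈ spectrum ℂ (Complex.I • M) :=
    spectrum.smul_mem_smul_iff (r := Units.mk0 Complex.I Complex.I_ne_zero) |>.mpr hμ
  obtain ⟨r, -, hr⟩ := hIM.spectrum_eq_image_range ▸ hIμ
  simpa using congrArg Complex.im hr.symm

theorem conjTranspose_map_ofReal_eq_neg {W : Matrix n n ℝ} (hW : Wᵀ = -W) :
    (W.map ((↑) : ℝ → ℂ))ᴴ = -W.map ((↑) : ℝ → ℂ) := by
  ext i j
  simpa using congrArg (fun A : Matrix n n ℝ => (A i j : ℂ)) hW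

theorem map_ofReal_diagonal_eq_mul_self [Fintype n] [DecidableEq n] {dv : n → ℝ}
    (hdv : ∀ i, 0 ≤ dv i) :
    (diagonal dv).map ((↑) : ℝ → ℂ) =
      diagonal (fun i => (√(dv i) : ℂ)) * diagonal (fun i => (√(dv i) : ℂ)) := by
  rw [diagonal_map Complex.ofReal_zero, diagonal_mul_diagonal]
  congr! 2 with i
  exact_mod_cast (Real.mul_self_sqrt (hdv i)).symm

end Matrix

/-- **The product of a positive diagonal matrix and an antisymmetric matrix has purely
imaginary spectrum.** If `D = diagonal dv` with `dv i > 0` for all `i` and `Wᵀ = −W`, then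
every complex eigenvalue of the complexification of `D * W` has zero real part. -/
theorem diagonal_mul_antisymmetric_spectrum_purely_imaginary
    (d : ℕ) (dv : Fin d → ℝ) (hdv : ∀ i, 0 < dv i)
    (W : Matrix (Fin d) (Fin d) ℝ) (hW : W.transpose = -W) :
    ∀ μ ∈ spectrum ℂ ((Matrix.diagonal dv * W).map fun x : ℝ => (x : ℂ)), μ.re = 0 := by
  intro μ hμ
  obtain rfl | hμ0 := eq_or_ne μ 0
  · rfl
  set S : Matrix (Fin d) (Fin d) ℂ := diagonal fun i => (√(dv i) : ℂ)
  set Wc := W.map ((↑) : ℝ → ℂ)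
  have hDW : (diagonal dv * W).map ((↑) : ℝ → ℂ) = S * (S * Wc) := by
    rw [← mul_assoc, ← map_ofReal_diagonal_eq_mul_self fun i => (hdv i).le]
    exact Matrix.map_mul (f := Complex.ofRealHom)
  have hS : Sᴴ = S := by simp [S, diagonal_conjTranspose]
  have hskew : (S * Wc * S)ᴴ = -(S * Wc * S) := by
    rw [conjTranspose_mul, conjTranspose_mul, hS, conjTranspose_map_ofReal_eq_neg hW]
    noncomm_ring
  have hμSWS : μ ∈ spectrum ℂ (S * Wc * S) := by
    have hμDW : μ ∈ spectrum ℂ (S * (S * Wc)) \ {0} := ⟨hDW ▸ hμ, hμ0⟩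
    exact (spectrum.nonzero_mul_comm (𝕜 := ℂ) S (S * Wc) ▸ hμDW).1
  exact re_eq_zero_of_mem_spectrum_of_conjTranspose_eq_neg hskew hμSWS
end

section
/- Let T > 0. There do not exist a Lipschitz continuous function h : ℝ × ℝ² → ℝ and a continuous function ξ : ℝ² → ℝ such that for every continuously differentiable x : [0,T] → ℝ and every differentiable y : [0,T] → ℝ with y(0) = ξ(0, x(0)) and y'(t) = h(y(t), (t, x(t))) for all t ∈ [0,T], one has y(t) = x(t) − x(0) for all t ∈ [0,T]. (The increment map x ↦ (t ↦ x(t) − x(0)), which is exactly computed by a controlled differential equation, cannot be represented by any ODE of the form y' = h(y(t), (t, x(t))); hence controlled differential equations are strictly more expressive than such ODE models.) -/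
/-!
With a constant control `x ≡ c` the increment vanishes, and by global Picard–Lindelöf
the model has a solution started at `ξ (0, c)`; it must be identically `0`, which forces
`ξ (0, c) = 0` and `h 0 (t, c) = 0`. Taking `c = t` pointwise shows that `y ≡ 0` also solves the
model for the control `x = id`, whose increment at time `T` is `T ≠ 0`.
-/

open Set
open scoped NNReal

variable {E : Type*} [NormedAddCommGroup E] [NormedSpace ℝ E]
  {γ γ' : ℝ → E} {v : ℝ → E → E} {s s' : Set ℝ}

lemma IsIntegralCurveOn.congr (hγ : IsIntegralCurveOn γ v s) (h : EqOn γ γ' s) :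
    IsIntegralCurveOn γ' v s := fun t ht => by
  rw [← h ht]
  exact (hγ t ht).congr (fun u hu => (h hu).symm) (h ht).symm

lemma IsIntegralCurveOn.hasDerivWithinAt_of_isClosed (hγ : IsIntegralCurveOn γ v s)
    (hs : IsClosed s) (t : ℝ) : HasDerivWithinAt γ (v t (γ t)) s t := by
  by_cases ht : t ∈ s
  · exact hγ t ht
  · rw [← hs.closure_eq] at ht
    exact hasDerivWithinAt_iff_hasFDerivWithinAt.2 (HasFDerivWithinAt.of_notMem_closure ht)

lemma IsIntegralCurveOn.union_of_isClosed (hγ : IsIntegralCurveOn γ v s)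
    (hγ' : IsIntegralCurveOn γ v s') (hs : IsClosed s) (hs' : IsClosed s') :
    IsIntegralCurveOn γ v (s ∪ s') := fun t _ =>
  (hγ.hasDerivWithinAt_of_isClosed hs t).union (hγ'.hasDerivWithinAt_of_isClosed hs' t)

lemma IsIntegralCurveOn.Icc_ite {a m b : ℝ} (ham : a ≤ m) (hmb : m ≤ b)
    (hγ : IsIntegralCurveOn γ v (Icc a m)) (hγ' : IsIntegralCurveOn γ' v (Icc m b))
    (hm : γ m = γ' m) :
    IsIntegralCurveOn (fun t => if t ≤ m then γ t else γ' t) v (Icc a b) := by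
  have hleft : EqOn γ (fun t => if t ≤ m then γ t else γ' t) (Icc a m) :=
    fun t ht => (if_pos ht.2).symm
  have hright : EqOn γ' (fun t => if t ≤ m then γ t else γ' t) (Icc m b) := by
    intro t ht
    rcases ht.1.eq_or_lt with rfl | hlt
    · simp [hm]
    · simp [not_le.2 hlt]
  rw [← Icc_union_Icc_eq_Icc ham hmb]
  exact (hγ.congr hleft).union_of_isClosed (hγ'.congr hright) isClosed_Icc isClosed_Icc

lemma IsIntegralCurveOn.vectorField_eq_zero_of_eqOn_const {p : E}
    (hγ : IsIntegralCurveOn γ v s) (hs : UniqueDiffOn ℝ s) (hp : EqOn γ (fun _ => p) s)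
    {t : ℝ} (ht : t ∈ s) : v t p = 0 := by
  have hderiv := hγ t ht
  rw [hp ht] at hderiv
  exact (hs t ht).eq_deriv s hderiv ((hasDerivWithinAt_const t s p).congr hp (hp ht))

variable [CompleteSpace E]

theorem exists_isIntegralCurveOn_Icc_of_mul_le_half {K : ℝ≥0} {a b : ℝ} (hab : a ≤ b)
    (hv : ∀ x, ContinuousOn (v · x) (Icc a b)) (hK : ∀ t ∈ Icc a b, LipschitzWith K (v t))
    (hKab : K * (b - a) ≤ 1 / 2) (x₀ : E) :
    ∃ γ : ℝ → E, γ a = x₀ ∧ IsIntegralCurveOn γ v (Icc a b) := by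
  obtain ⟨M₀, hM₀⟩ : ∃ M₀ : ℝ≥0, ∀ t ∈ Icc a b, ‖v t x₀‖ ≤ M₀ := by
    obtain ⟨M, hM⟩ := isCompact_Icc.exists_bound_of_continuousOn (hv x₀)
    exact ⟨M.toNNReal, fun t ht => (hM t ht).trans M.le_coe_toNNReal⟩
  -- On the ball of radius `R` about `x₀` the field is bounded by `M₀ + K R ≤ 2 M₀`, so the
  -- solution cannot leave this ball before time `b`.
  let R : ℝ≥0 := ⟨2 * M₀ * (b - a), mul_nonneg (by positivity) (sub_nonneg.2 hab)⟩
  have hpl : IsPicardLindelof v (tmin := a) (tmax := b) ⟨a, left_mem_Icc.2 hab⟩ x₀ R 0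
      (M₀ + K * R) K := by
    refine ⟨fun t ht => (hK t ht).lipschitzOnWith, fun x _ => hv x, fun t ht x hx => ?_, ?_⟩
    · calc ‖v t x‖ ≤ ‖v t x₀‖ + ‖v t x - v t x₀‖ := norm_le_insert' _ _
        _ ≤ M₀ + K * R := by
          gcongr
          · exact hM₀ t ht
          · rw [← dist_eq_norm]
            exact (hK t ht).dist_le_mul_of_le (Metric.mem_closedBall.1 hx)
    · have hba : max (b - a) (a - a) = b - a := max_eq_left (by linarith)
      have hRd := mul_nonneg (mul_nonneg M₀.coe_nonneg (sub_nonneg.2 hab)) (sub_nonneg.2 hKab)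
      change ((M₀ : ℝ) + K * (2 * M₀ * (b - a))) * max (b - a) (a - a)
        ≤ 2 * M₀ * (b - a) - 0
      rw [hba]
      linear_combination 2 * hRd
  exact hpl.exists_eq_forall_mem_Icc_hasDerivWithinAt₀

theorem exists_isIntegralCurveOn_Icc_of_lipschitzWith {K : ℝ≥0} {a b : ℝ} (hab : a ≤ b)
    (hv : ∀ x, ContinuousOn (v · x) (Icc a b)) (hK : ∀ t ∈ Icc a b, LipschitzWith K (v t))
    (x₀ : E) : ∃ γ : ℝ → E, γ a = x₀ ∧ IsIntegralCurveOn γ v (Icc a b) := by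
  obtain ⟨δ, hδ, hKδ⟩ : ∃ δ : ℝ, 0 < δ ∧ K * δ ≤ 1 / 2 :=
    ⟨1 / (2 * (K + 1)), by positivity, by
      rw [mul_one_div, div_le_div_iff₀ (by positivity) two_pos]
      linarith⟩
  have hsolvable (n : ℕ) : ∀ c ∈ Icc a b, c - a ≤ (n + 1) * δ →
      ∃ γ : ℝ → E, γ a = x₀ ∧ IsIntegralCurveOn γ v (Icc a c) := by
    induction n with
    | zero =>
      intro c hc hcn
      have hsub : Icc a c ⊆ Icc a b := Icc_subset_Icc_right hc.2
      exact exists_isIntegralCurveOn_Icc_of_mul_le_half hc.1 (fun x => (hv x).mono hsub)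
        (fun t ht => hK t (hsub ht))
        ((mul_le_mul_of_nonneg_left (by simpa using hcn) K.coe_nonneg).trans hKδ) x₀
    | succ n ih =>
      intro c hc hcn
      set m := max a (c - δ)
      have ham : a ≤ m := le_max_left _ _
      have hmc : m ≤ c := max_le hc.1 (by linarith)
      obtain ⟨γ, hγa, hγ⟩ := ih m ⟨ham, hmc.trans hc.2⟩ (by
        push_cast at hcn
        exact sub_le_iff_le_add.2 (max_le (le_add_of_nonneg_left (by positivity)) (by linarith)))
      have hsub : Icc m c ⊆ Icc a b := Icc_subset_Icc ham hc.2
      obtain ⟨γ', hγ'm, hγ'⟩ := exists_isIntegralCurveOn_Icc_of_mul_le_half hmc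
        (fun x => (hv x).mono hsub) (fun t ht => hK t (hsub ht))
        ((mul_le_mul_of_nonneg_left (by linarith [le_max_right a (c - δ)])
          K.coe_nonneg).trans hKδ)
        (γ m)
      exact ⟨_, by simp [ham, hγa], hγ.Icc_ite ham hmc hγ' hγ'm.symm⟩
  obtain ⟨n, hn⟩ := exists_nat_ge ((b - a) / δ)
  exact hsolvable n b ⟨hab, le_rfl⟩ (by rw [div_le_iff₀ hδ] at hn; linarith)

/-- **CDEs are strictly more expressive than ODE models of the form `y' = h(y(t), (t, x(t)))`.**
No Lipschitz `h : ℝ × ℝ² → ℝ` and continuous initial map `ξ : ℝ² → ℝ` can make every solution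
of `y(0) = ξ(0, x(0))`, `y'(t) = h(y(t), (t, x(t)))` compute the increment `x(t) − x(0)` of
every continuously differentiable control `x`. -/
theorem no_ode_model_computes_increments
    (T : ℝ) (hT : 0 < T) :
    ¬ ∃ (h : ℝ → ℝ × ℝ → ℝ) (C : NNReal) (ξ : ℝ × ℝ → ℝ),
      LipschitzWith C (Function.uncurry h) ∧ Continuous ξ ∧
      ∀ x x' : ℝ → ℝ,
        (∀ t ∈ Set.Icc (0:ℝ) T, HasDerivWithinAt x (x' t) (Set.Icc 0 T) t) →
        ContinuousOn x' (Set.Icc (0:ℝ) T) →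
        ∀ y : ℝ → ℝ,
          y 0 = ξ (0, x 0) →
          (∀ t ∈ Set.Icc (0:ℝ) T, HasDerivWithinAt y (h (y t) (t, x t)) (Set.Icc 0 T) t) →
          ∀ t ∈ Set.Icc (0:ℝ) T, y t = x t - x 0 := by
  rintro ⟨h, C, ξ, hlip, -, H⟩
  have hconst_control (c : ℝ) : ξ (0, c) = 0 ∧ ∀ t ∈ Icc 0 T, h 0 (t, c) = 0 := by
    obtain ⟨y, hy0, hy⟩ := exists_isIntegralCurveOn_Icc_of_lipschitzWith
      (v := fun t y => h y (t, c)) hT.le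
      (fun y => (hlip.continuous.comp
        (by fun_prop : Continuous fun t : ℝ => (y, (t, c)))).continuousOn)
      (fun t _ => hlip.comp (LipschitzWith.prodMk_right (t, c))) (ξ (0, c))
    have hy_zero : EqOn y (fun _ => 0) (Icc 0 T) := fun t ht => by
      simpa using H (fun _ => c) 0 (fun t _ => hasDerivWithinAt_const t _ c) continuousOn_const
        y hy0 hy t ht
    exact ⟨hy0 ▸ hy_zero (left_mem_Icc.2 hT.le),
      fun t ht => hy.vectorField_eq_zero_of_eqOn_const (uniqueDiffOn_Icc hT) hy_zero ht⟩
  have hid := H id 1 (fun t _ => hasDerivWithinAt_id t _) continuousOn_const (fun _ => 0)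
    (hconst_control 0).1.symm
    (fun t ht => by
      simpa [(hconst_control t).2 t ht] using hasDerivWithinAt_const t (Icc 0 T) (0 : ℝ))
    T (right_mem_Icc.2 hT.le)
  exact hT.ne' (by simpa using hid.symm)
end

section
/- Let T > 0, let f : ℝ × ℝ^d → ℝ^d be continuously differentiable, and let Φ : ℝ × ℝ^d → ℝ^d be twice continuously differentiable with Φ(0,x) = x for all x and ∂Φ/∂t(t,x) = f(t, Φ(t,x)) for all (t,x). Let L : ℝ^d → ℝ be continuously differentiable. Fix x₀ ∈ ℝ^d and write y(t) = Φ(t, x₀). Suppose a : [0,T] → ℝ^d is differentiable with terminal condition a(T) = ∇L(y(T)) and a'(t) = −((∂f/∂y)(t, y(t)))ᵀ a(t) for all t ∈ [0,T], where (∂f/∂y)(t,y) ∈ ℝ^{d×d} is the Jacobian of f in its second argument. Then a(0) equals the gradient at x₀ of the map x ↦ L(Φ(T, x)), i.e. a(0) = ∇(L ∘ Φ(T,·))(x₀). (The continuous adjoint equations, solved backwards in time from the terminal gradient, compute the gradient of a terminal loss with respect to the initial condition of the ODE.) -/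
/-!
Let `v(t) = ∂ₓΦ(t, x₀) eᵢ`. Differentiating the flow equation in `x` and using the symmetry of
the second derivative of `Φ` shows that `v` solves the variational equation `v' = J(t) v`, where
`J(t) = (∂f/∂y)(t, y(t))`. As `a' = -J(t)ᵀ a`, the pairing `a(t) ⬝ᵥ v(t)` has derivative zero and
is therefore constant on `[0, T]`. At `t = 0` it is `a(0)ᵢ` because `Φ(0, ·) = id`; at `t = T` it
is `∇L(y(T)) ⬝ᵥ ∂ₓΦ(T, x₀) eᵢ`, which is the `i`-th partial derivative of `L ∘ Φ(T, ·)` at `x₀` by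
the chain rule.
-/

open Function Matrix Set

section PartialDerivatives

variable {E F : Type*} [NormedAddCommGroup E] [NormedSpace ℝ E]
  [NormedAddCommGroup F] [NormedSpace ℝ F] {Φ : ℝ → E → F} {D : ℝ × E →L[ℝ] F} {t : ℝ} {x : E}

theorem HasFDerivAt.hasDerivAt_of_uncurry (h : HasFDerivAt (uncurry Φ) D (t, x)) :
    HasDerivAt (fun s => Φ s x) (D (1, 0)) t := by
  exact h.comp_hasDerivAt t ((hasDerivAt_id t).prodMk (hasDerivAt_const t x))

theorem HasFDerivAt.hasFDerivAt_of_uncurry (h : HasFDerivAt (uncurry Φ) D (t, x)) :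
    HasFDerivAt (Φ t) (D.comp (.inr ℝ ℝ E)) x :=
  h.comp x (hasFDerivAt_prodMk_right t x)

theorem DifferentiableAt.differentiableAt_of_uncurry (h : DifferentiableAt ℝ (uncurry Φ) (t, x)) :
    DifferentiableAt ℝ (Φ t) x :=
  h.hasFDerivAt.hasFDerivAt_of_uncurry.differentiableAt

theorem hasDerivAt_fderiv_apply_of_contDiff_uncurry (hΦ : ContDiff ℝ 2 (uncurry Φ)) (t : ℝ)
    (x w : E) :
    HasDerivAt (fun s => fderiv ℝ (Φ s) x w)
      (fderiv ℝ (fun y => deriv (fun s => Φ s y) t) x w) t := by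
  set ψ := uncurry Φ
  have hψ (p : ℝ × E) : HasFDerivAt ψ (fderiv ℝ ψ p) p :=
    (hΦ.differentiable two_ne_zero p).hasFDerivAt
  have hψ' (v : ℝ × E) : HasFDerivAt (fun p => fderiv ℝ ψ p v)
      ((fderiv ℝ (fderiv ℝ ψ) (t, x)).flip v) (t, x) := by
    simpa using ((hΦ.fderiv_right (m := 1) le_rfl).differentiable one_ne_zero
      (t, x)).hasFDerivAt.clm_apply (hasFDerivAt_const v (t, x))
  have h_x : (fun s => fderiv ℝ (Φ s) x w) = fun s => fderiv ℝ ψ (s, x) (0, w) := by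
    funext s
    simp [(hψ (s, x)).hasFDerivAt_of_uncurry.fderiv]
  have h_t : (fun y => deriv (fun s => Φ s y) t) = fun y => fderiv ℝ ψ (t, y) (1, 0) :=
    funext fun y => (hψ (t, y)).hasDerivAt_of_uncurry.deriv
  rw [h_x, h_t,
    ((hψ' (1, 0)).hasFDerivAt_of_uncurry (Φ := fun s y => fderiv ℝ ψ (s, y) (1, 0))).fderiv]
  -- both sides are values of the second derivative of `ψ`, which is symmetric
  convert (hψ' (0, w)).hasDerivAt_of_uncurry (Φ := fun s y => fderiv ℝ ψ (s, y) (0, w)) using 1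
  simpa using (hΦ.contDiffAt.isSymmSndFDerivAt (by simp)) (0, w) (1, 0)

theorem hasDerivAt_fderiv_flow_apply {f : ℝ → E → E} {Φ : ℝ → E → E}
    (hΦ : ContDiff ℝ 2 (uncurry Φ)) (hflow : ∀ y, HasDerivAt (fun s => Φ s y) (f t (Φ t y)) t)
    (hf : DifferentiableAt ℝ (f t) (Φ t x)) (w : E) :
    HasDerivAt (fun s => fderiv ℝ (Φ s) x w) (fderiv ℝ (f t) (Φ t x) (fderiv ℝ (Φ t) x w)) t := by
  have h_t : (fun y => deriv (fun s => Φ s y) t) = f t ∘ Φ t := funext fun y => (hflow y).deriv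
  have hΦt := (hΦ.differentiable two_ne_zero (t, x)).differentiableAt_of_uncurry
  simpa [h_t, fderiv_comp x hf hΦt] using hasDerivAt_fderiv_apply_of_contDiff_uncurry hΦ t x w

end PartialDerivatives

section Coordinates

variable {𝕜 : Type*} [NontriviallyNormedField 𝕜] {ι κ : Type*} [Fintype ι]

theorem HasDerivWithinAt.dotProduct {a v : 𝕜 → ι → 𝕜} {a' v' : ι → 𝕜} {s : Set 𝕜} {t : 𝕜}
    (ha : HasDerivWithinAt a a' s t) (hv : HasDerivWithinAt v v' s t) :
    HasDerivWithinAt (fun τ => a τ ⬝ᵥ v τ) (a' ⬝ᵥ v t + a t ⬝ᵥ v') s t := by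
  show HasDerivWithinAt (fun τ => ∑ k, a τ k * v τ k) (∑ k, a' k * v t k + ∑ k, a t k * v' k) s t
  rw [← Finset.sum_add_distrib]
  exact HasDerivWithinAt.fun_sum fun k _ =>
    (hasDerivWithinAt_pi.mp ha k).fun_mul (hasDerivWithinAt_pi.mp hv k)

theorem hasDerivWithinAt_dotProduct_of_adjoint {A : Matrix ι ι 𝕜} {a v : 𝕜 → ι → 𝕜} {s : Set 𝕜}
    {t : 𝕜} (ha : HasDerivWithinAt a (-(Aᵀ *ᵥ a t)) s t) (hv : HasDerivWithinAt v (A *ᵥ v t) s t) :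
    HasDerivWithinAt (fun τ => a τ ⬝ᵥ v τ) 0 s t := by
  simpa [mulVec_transpose, dotProduct_mulVec] using ha.dotProduct hv

variable [DecidableEq ι]

theorem ContinuousLinearMap.apply_eq_dotProduct_single (ℓ : (ι → 𝕜) →L[𝕜] 𝕜) (w : ι → 𝕜) :
    ℓ w = (fun i => ℓ (Pi.single i 1)) ⬝ᵥ w := by
  conv_lhs => rw [pi_eq_sum_univ' w]
  simp [dotProduct, mul_comm]

noncomputable def jacobianMatrix (g : (ι → 𝕜) → κ → 𝕜) (x : ι → 𝕜) : Matrix κ ι 𝕜 :=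
  Matrix.of fun k i => fderiv 𝕜 (fun y => g y k) x (Pi.single i 1)

theorem jacobianMatrix_mulVec {g : (ι → 𝕜) → κ → 𝕜} {x : ι → 𝕜} (hg : DifferentiableAt 𝕜 g x)
    (w : ι → 𝕜) : jacobianMatrix g x *ᵥ w = fderiv 𝕜 g x w := by
  ext k
  calc (jacobianMatrix g x *ᵥ w) k = fderiv 𝕜 (fun y => g y k) x w :=
        (ContinuousLinearMap.apply_eq_dotProduct_single _ w).symm
    _ = fderiv 𝕜 g x w k := by rw [fderiv_apply hg]; rfl

end Coordinates

theorem eq_of_hasDerivWithinAt_zero_Icc {E : Type*} [NormedAddCommGroup E] [NormedSpace ℝ E]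
    {g : ℝ → E} {a b : ℝ} (hab : a ≤ b) (hg : ∀ t ∈ Icc a b, HasDerivWithinAt g 0 (Icc a b) t) :
    g b = g a :=
  constant_of_has_deriv_right_zero (fun t ht => (hg t ht).continuousWithinAt)
    (fun t ht => (hg t (Ico_subset_Icc_self ht)).mono_of_mem_nhdsWithin (Icc_mem_nhdsGE_of_mem ht))
    b (right_mem_Icc.mpr hab)

/-- **The continuous adjoint method computes the gradient of a terminal loss.** Let `Φ` be a
C² flow of a C¹ vector field `f` on `ℝ^d`, let `L : ℝ^d → ℝ` be C¹, write `y(t) = Φ(t, x₀)`,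
and suppose `a : [0,T] → ℝ^d` solves the adjoint equation
`a'(t) = −((∂f/∂y)(t, y(t)))ᵀ a(t)` backwards from `a(T) = ∇L(y(T))`. Then
`a(0) = ∇(L ∘ Φ(T,·))(x₀)`. -/
theorem continuous_adjoint_computes_gradient
    (T : ℝ) (hT : 0 < T) (d : ℕ)
    (f : ℝ → (Fin d → ℝ) → (Fin d → ℝ))
    (hf : ContDiff ℝ 1 (Function.uncurry f))
    (Φ : ℝ → (Fin d → ℝ) → (Fin d → ℝ))
    (hΦ : ContDiff ℝ 2 (Function.uncurry Φ))
    (hΦ0 : ∀ x, Φ 0 x = x)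
    (hflow : ∀ (t : ℝ) (x : Fin d → ℝ), HasDerivAt (fun s => Φ s x) (f t (Φ t x)) t)
    (L : (Fin d → ℝ) → ℝ) (hL : ContDiff ℝ 1 L)
    (x₀ : Fin d → ℝ)
    (a : ℝ → Fin d → ℝ)
    (haT : ∀ i, a T i = fderiv ℝ L (Φ T x₀) (Pi.single i 1))
    (ha : ∀ t ∈ Set.Icc (0:ℝ) T,
      HasDerivWithinAt a
        (fun i => -∑ k, fderiv ℝ (fun y => f t y k) (Φ t x₀) (Pi.single i 1) * a t k)
        (Set.Icc 0 T) t) :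
    ∀ i, a 0 i = fderiv ℝ (fun x => L (Φ T x)) x₀ (Pi.single i 1) := by
  intro i
  set v : ℝ → Fin d → ℝ := fun t => fderiv ℝ (Φ t) x₀ (Pi.single i 1)
  have hf_t (t : ℝ) (y : Fin d → ℝ) : DifferentiableAt ℝ (f t) y :=
    (hf.differentiable one_ne_zero (t, y)).differentiableAt_of_uncurry
  have hv (t : ℝ) : HasDerivAt v (jacobianMatrix (f t) (Φ t x₀) *ᵥ v t) t := by
    rw [jacobianMatrix_mulVec (hf_t t _)]
    exact hasDerivAt_fderiv_flow_apply hΦ (hflow t) (hf_t t _) _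
  -- `ha t ht` reads `a' = -Jᵀ a` for `J = jacobianMatrix (f t) (Φ t x₀)` after unfolding
  have hpairing : a T ⬝ᵥ v T = a 0 ⬝ᵥ v 0 :=
    eq_of_hasDerivWithinAt_zero_Icc hT.le fun t ht =>
      hasDerivWithinAt_dotProduct_of_adjoint (ha t ht) (hv t).hasDerivWithinAt
  have hv0 : v 0 = Pi.single i 1 := by
    simp [v, show Φ 0 = id from funext hΦ0]
  have hΦT := (hΦ.differentiable two_ne_zero (T, x₀)).differentiableAt_of_uncurry
  calc a 0 i = a 0 ⬝ᵥ v 0 := by rw [hv0, dotProduct_single_one]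
    _ = a T ⬝ᵥ v T := hpairing.symm
    _ = fderiv ℝ L (Φ T x₀) (v T) := by
      rw [ContinuousLinearMap.apply_eq_dotProduct_single _ (v T), ← funext haT]
    _ = fderiv ℝ (fun x => L (Φ T x)) x₀ (Pi.single i 1) := by
      rw [fderiv_fun_comp x₀ (hL.differentiable one_ne_zero _) hΦT]
      rfl
end

section
/- Let y₀ ∈ ℂ and let z = iθ be purely imaginary with θ ∈ ℝ and |θ| < 1. Define complex sequences (y_j), (ŷ_j) by ŷ_0 = y_0 = y₀ and, for j ≥ 0, ŷ_{j+1} = 2y_j − ŷ_j + z ŷ_j and y_{j+1} = y_j + (z/2)(ŷ_j + ŷ_{j+1}). Then the sequence (y_j)_{j∈ℕ} is bounded: there exists C > 0 with |y_j| ≤ C for all j ∈ ℕ. (Stability of the reversible Heun method on the linear test equation: purely imaginary λΔt of modulus less than one lies in the region of stability.) -/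
/-!
With `s² = 1 + z²`, the reversible Heun step acts on the two combinations `y - (1 ± s)/2 · ŷ`
by multiplication with `z ∓ s`, and `y` is recovered from them whenever `s ≠ 0`. For `z = iθ`
and `|θ| < 1` take `s = √(1 - θ²) > 0`: both multipliers `iθ ∓ s` lie on the unit circle, so
both combinations keep their modulus and `y` stays bounded.
-/

open Complex

theorem heun_mode_step {K : Type*} [Field K] [NeZero (2 : K)] {z s : K} {y yhat : ℕ → K}
    (hs : s ^ 2 = 1 + z ^ 2)
    (hyhat : ∀ j, yhat (j + 1) = 2 * y j - yhat j + z * yhat j)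
    (hy : ∀ j, y (j + 1) = y j + (z / 2) * (yhat j + yhat (j + 1))) (j : ℕ) :
    y (j + 1) - (1 + s) / 2 * yhat (j + 1) = (z - s) * (y j - (1 + s) / 2 * yhat j) := by
  rw [hy j, hyhat j]
  field_simp
  linear_combination -(yhat j) * hs

theorem norm_eq_norm_zero_of_succ_eq_mul {𝕜 : Type*} [NormedDivisionRing 𝕜] {u : ℕ → 𝕜}
    {μ : 𝕜} (hμ : ‖μ‖ = 1) (hu : ∀ j, u (j + 1) = μ * u j) (j : ℕ) : ‖u j‖ = ‖u 0‖ := by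
  induction j with
  | zero => rfl
  | succ j ih => rw [hu j, norm_mul, hμ, one_mul, ih]

theorem norm_ofReal_mul_I_sub_ofReal {θ σ : ℝ} (h : σ ^ 2 + θ ^ 2 = 1) :
    ‖(θ : ℂ) * I - σ‖ = 1 := by
  rw [show (θ : ℂ) * I - σ = ((-σ : ℝ) : ℂ) + θ * I by push_cast; ring, norm_add_mul_I]
  simp [h]

theorem exists_norm_le_of_mul_eq_sub {𝕜 : Type*} [NormedField 𝕜] {y u v : ℕ → 𝕜} {s a b : 𝕜}
    (hs : s ≠ 0) (hu : ∀ j, ‖u j‖ = ‖u 0‖) (hv : ∀ j, ‖v j‖ = ‖v 0‖)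
    (hy : ∀ j, s * y j = a * v j - b * u j) :
    ∃ C > 0, ∀ j, ‖y j‖ ≤ C := by
  refine ⟨(‖a‖ * ‖v 0‖ + ‖b‖ * ‖u 0‖) / ‖s‖ + 1, by positivity, fun j => ?_⟩
  have hbound : ‖s‖ * ‖y j‖ ≤ ‖a‖ * ‖v 0‖ + ‖b‖ * ‖u 0‖ :=
    calc ‖s‖ * ‖y j‖ = ‖a * v j - b * u j‖ := by rw [← norm_mul, hy j]
      _ ≤ ‖a * v j‖ + ‖b * u j‖ := norm_sub_le _ _
      _ = ‖a‖ * ‖v 0‖ + ‖b‖ * ‖u 0‖ := by rw [norm_mul, norm_mul, hu j, hv j]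
  have hyj : ‖y j‖ ≤ (‖a‖ * ‖v 0‖ + ‖b‖ * ‖u 0‖) / ‖s‖ :=
    (le_div_iff₀' (norm_pos_iff.mpr hs)).mpr hbound
  linarith

theorem norm_heun_mode_eq {θ σ : ℝ} (h : σ ^ 2 + θ ^ 2 = 1) {y yhat : ℕ → ℂ}
    (hyhat : ∀ j, yhat (j + 1) = 2 * y j - yhat j + (θ * I) * yhat j)
    (hy : ∀ j, y (j + 1) = y j + (θ * I / 2) * (yhat j + yhat (j + 1))) (j : ℕ) :
    ‖y j - (1 + σ) / 2 * yhat j‖ = ‖y 0 - (1 + σ) / 2 * yhat 0‖ := by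
  have hc : (σ : ℂ) ^ 2 + θ ^ 2 = 1 := by exact_mod_cast h
  have hσ : (σ : ℂ) ^ 2 = 1 + (θ * I) ^ 2 := by linear_combination hc - (θ : ℂ) ^ 2 * I_sq
  exact norm_eq_norm_zero_of_succ_eq_mul (u := fun j => y j - (1 + σ) / 2 * yhat j)
    (norm_ofReal_mul_I_sub_ofReal h)
    (heun_mode_step hσ hyhat hy) j

theorem reversible_heun_stable_on_imaginary_interval_general
    (θ : ℝ) (hθ : |θ| < 1)
    (y yhat : ℕ → ℂ)
    (hyhat : ∀ j, yhat (j + 1) = 2 * y j - yhat j + (θ * Complex.I) * yhat j)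
    (hy : ∀ j, y (j + 1) = y j + (θ * Complex.I / 2) * (yhat j + yhat (j + 1))) :
    ∃ C > 0, ∀ j, ‖y j‖ ≤ C := by
  have hθ2 : θ ^ 2 < 1 := (sq_lt_one_iff_abs_lt_one θ).mpr hθ
  set s : ℝ := √(1 - θ ^ 2)
  have hs_pos : 0 < s := Real.sqrt_pos.mpr (by linarith)
  have hsθ : s ^ 2 + θ ^ 2 = 1 := by rw [Real.sq_sqrt (by linarith)]; ring
  have hnegsθ : (-s) ^ 2 + θ ^ 2 = 1 := by rw [neg_sq, hsθ]
  refine exists_norm_le_of_mul_eq_sub (s := (s : ℂ)) (a := (1 + s) / 2) (b := (1 - s) / 2)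
    (ofReal_ne_zero.mpr hs_pos.ne') (norm_heun_mode_eq hsθ hyhat hy)
    (norm_heun_mode_eq hnegsθ hyhat hy) fun j => ?_
  push_cast
  ring

/-- **Stability of the reversible Heun method on the linear test equation.** For `z = iθ`
purely imaginary with `|θ| < 1`, the reversible Heun iterates
`ŷ_{j+1} = 2y_j − ŷ_j + z ŷ_j`, `y_{j+1} = y_j + (z/2)(ŷ_j + ŷ_{j+1})` started from
`y_0 = ŷ_0 = y₀` remain bounded. -/
theorem reversible_heun_stable_on_imaginary_interval
    (y₀ : ℂ) (θ : ℝ) (hθ : |θ| < 1)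
    (y yhat : ℕ → ℂ)
    (hy0 : y 0 = y₀) (hyhat0 : yhat 0 = y₀)
    (hyhat : ∀ j, yhat (j + 1) = 2 * y j - yhat j + (θ * Complex.I) * yhat j)
    (hy : ∀ j, y (j + 1) = y j + (θ * Complex.I / 2) * (yhat j + yhat (j + 1))) :
    ∃ C > 0, ∀ j, ‖y j‖ ≤ C :=
  reversible_heun_stable_on_imaginary_interval_general θ hθ y yhat hyhat hy
end

section
/- Let y₀ ∈ ℂ with y₀ ≠ 0, and let z ∈ ℂ be such that z does not lie in the imaginary interval [−i, i], i.e. either Re(z) ≠ 0 or |Im(z)| > 1. Define complex sequences (y_j), (ŷ_j) by ŷ_0 = y_0 = y₀ and, for j ≥ 0, ŷ_{j+1} = 2y_j − ŷ_j + z ŷ_j and y_{j+1} = y_j + (z/2)(ŷ_j + ŷ_{j+1}). Then the sequence (y_j)_{j∈ℕ} is unbounded: for every C > 0 there exists j ∈ ℕ with |y_j| > C. (Instability of the reversible Heun method on the linear test equation outside the imaginary interval [−i, i].) -/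
/-!
One step of the method is the linear map `(y, ŷ) ↦ ((1 + z) y + (z²/2) ŷ, 2y + (z - 1) ŷ)`, with
trace `2z` and determinant `-1`: its eigenvalues solve `μ² = 2zμ + 1` and have product `-1`, so one
has `|μ| ≥ 1`, and `|μ| = 1` forces `μ⁻¹ = conj μ`, i.e. `z = i Im μ ∈ [-i, i]`. Outside that
interval the left eigenvector for `μ` makes `2 y_j + (μ - z - 1) ŷ_j` grow like `μ^j`; as `z ≠ 0`,
`ŷ_j` can be eliminated using `y_{j+1}`, so `y` itself cannot stay bounded.
-/

open ComplexConjugate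

namespace ReversibleHeun

theorem exists_eigenvalue_one_le_norm (z : ℂ) : ∃ μ : ℂ, μ ^ 2 = 2 * z * μ + 1 ∧ 1 ≤ ‖μ‖ := by
  obtain ⟨w, hw⟩ := IsAlgClosed.exists_pow_nat_eq (z ^ 2 + 1) two_pos
  have hprod : ‖z + w‖ * ‖z - w‖ = 1 := by
    rw [← norm_mul, show (z + w) * (z - w) = -1 by linear_combination -hw, norm_neg, norm_one]
  rcases le_total ‖z - w‖ ‖z + w‖ with h | h
  · exact ⟨z + w, by linear_combination hw, by nlinarith [norm_nonneg (z - w)]⟩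
  · exact ⟨z - w, by linear_combination hw, by nlinarith [norm_nonneg (z + w)]⟩

theorem eq_im_mul_I_of_eigenvalue_norm_eq_one {z μ : ℂ} (hμ : μ ^ 2 = 2 * z * μ + 1)
    (h1 : ‖μ‖ = 1) : z = μ.im * Complex.I := by
  have hμ0 : μ ≠ 0 := norm_ne_zero_iff.mp (by rw [h1]; exact one_ne_zero)
  have hconj : conj μ * μ = 1 := by
    rw [mul_comm, Complex.mul_conj, Complex.normSq_eq_norm_sq, h1]; norm_num
  have h2z : 2 * z = μ - conj μ := by
    apply mul_right_cancel₀ hμ0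
    linear_combination -hμ + hconj
  rw [Complex.sub_conj] at h2z
  push_cast at h2z
  linear_combination h2z / 2

theorem exists_eigenvalue_one_lt_norm {z : ℂ} (hz : z.re ≠ 0 ∨ 1 < |z.im|) :
    ∃ μ : ℂ, μ ^ 2 = 2 * z * μ + 1 ∧ 1 < ‖μ‖ := by
  obtain ⟨μ, hμ, h1⟩ := exists_eigenvalue_one_le_norm z
  refine ⟨μ, hμ, h1.lt_of_ne fun h1' => ?_⟩
  have hz' := eq_im_mul_I_of_eigenvalue_norm_eq_one hμ h1'.symm
  have him : |μ.im| ≤ 1 := h1'.symm ▸ μ.abs_im_le_norm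
  rcases hz with hre | him'
  · exact hre (by simp [hz'])
  · have hzim : z.im = μ.im := by simp [hz']
    rw [hzim] at him'
    linarith

theorem eigenvalue_sub_add_one_ne_zero {z μ : ℂ} (hz : z ≠ 0) (hμ : μ ^ 2 = 2 * z * μ + 1) :
    μ - z + 1 ≠ 0 := by
  intro h
  have hμz : μ = z - 1 := by linear_combination h
  exact hz (pow_eq_zero_iff two_ne_zero |>.mp (by rw [hμz] at hμ; linear_combination -hμ))

theorem exists_lt_norm_of_forall_add_eq_pow_mul {y : ℕ → ℂ} {a b c μ : ℂ} (hμ : 1 < ‖μ‖)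
    (hc : c ≠ 0) (h : ∀ j, a * y j + b * y (j + 1) = μ ^ j * c) (C : ℝ) : ∃ j, C < ‖y j‖ := by
  by_contra! hbdd
  obtain ⟨j, hj⟩ := pow_unbounded_of_one_lt ((‖a‖ + ‖b‖) * C / ‖c‖) hμ
  have hgrowth : ‖μ‖ ^ j * ‖c‖ ≤ (‖a‖ + ‖b‖) * C :=
    calc ‖μ‖ ^ j * ‖c‖ = ‖a * y j + b * y (j + 1)‖ := by rw [h, norm_mul, norm_pow]
      _ ≤ ‖a‖ * ‖y j‖ + ‖b‖ * ‖y (j + 1)‖ := by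
          grw [norm_add_le, norm_mul, norm_mul]
      _ ≤ ‖a‖ * C + ‖b‖ * C := by gcongr <;> exact hbdd _
      _ = (‖a‖ + ‖b‖) * C := by ring
  rw [div_lt_iff₀ (norm_pos_iff.mpr hc)] at hj
  linarith

variable {z : ℂ} {y yhat : ℕ → ℂ}

theorem eigencombination_eq_pow_mul {μ : ℂ} (hμ : μ ^ 2 = 2 * z * μ + 1)
    (hyhat : ∀ j, yhat (j + 1) = 2 * y j - yhat j + z * yhat j)
    (hy : ∀ j, y (j + 1) = y j + (z / 2) * (yhat j + yhat (j + 1))) (j : ℕ) :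
    2 * y j + (μ - z - 1) * yhat j = μ ^ j * (2 * y 0 + (μ - z - 1) * yhat 0) := by
  induction j with
  | zero => simp
  | succ j ih =>
    rw [pow_succ, mul_right_comm, ← ih]
    linear_combination 2 * hy j + (μ - 1) * hyhat j - yhat j * hμ

theorem sq_mul_yhat_eq
    (hyhat : ∀ j, yhat (j + 1) = 2 * y j - yhat j + z * yhat j)
    (hy : ∀ j, y (j + 1) = y j + (z / 2) * (yhat j + yhat (j + 1))) (j : ℕ) :
    z ^ 2 * yhat j = 2 * (y (j + 1) - (1 + z) * y j) := by
  linear_combination -2 * hy j - z * hyhat j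

theorem two_step_combination_eq_pow_mul {μ : ℂ} (hμ : μ ^ 2 = 2 * z * μ + 1)
    (hyhat : ∀ j, yhat (j + 1) = 2 * y j - yhat j + z * yhat j)
    (hy : ∀ j, y (j + 1) = y j + (z / 2) * (yhat j + yhat (j + 1))) (hyhat0 : yhat 0 = y 0)
    (j : ℕ) :
    (2 * z ^ 2 - 2 * (μ - z - 1) * (1 + z)) * y j + 2 * (μ - z - 1) * y (j + 1) =
      μ ^ j * (z ^ 2 * (μ - z + 1) * y 0) := by
  linear_combination z ^ 2 * eigencombination_eq_pow_mul hμ hyhat hy j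
    - (μ - z - 1) * sq_mul_yhat_eq hyhat hy j + z ^ 2 * μ ^ j * (μ - z - 1) * hyhat0

end ReversibleHeun

open ReversibleHeun in
/-- **Instability of the reversible Heun method outside the imaginary interval `[−i, i]`.**
If `y₀ ≠ 0` and `z ∈ ℂ` has `Re(z) ≠ 0` or `|Im(z)| > 1`, then the reversible Heun iterates
`ŷ_{j+1} = 2y_j − ŷ_j + z ŷ_j`, `y_{j+1} = y_j + (z/2)(ŷ_j + ŷ_{j+1})` started from
`y_0 = ŷ_0 = y₀` are unbounded. -/
theorem reversible_heun_unstable_outside_imaginary_interval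
    (y₀ : ℂ) (hy₀ : y₀ ≠ 0) (z : ℂ) (hz : z.re ≠ 0 ∨ 1 < |z.im|)
    (y yhat : ℕ → ℂ)
    (hy0 : y 0 = y₀) (hyhat0 : yhat 0 = y₀)
    (hyhat : ∀ j, yhat (j + 1) = 2 * y j - yhat j + z * yhat j)
    (hy : ∀ j, y (j + 1) = y j + (z / 2) * (yhat j + yhat (j + 1))) :
    ∀ C : ℝ, 0 < C → ∃ j, C < ‖y j‖ := by
  intro C _
  have hz0 : z ≠ 0 := by
    rintro rfl
    norm_num at hz
  obtain ⟨μ, hμ, hμ1⟩ := exists_eigenvalue_one_lt_norm hz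
  have hc : z ^ 2 * (μ - z + 1) * y 0 ≠ 0 := by
    rw [hy0]
    exact mul_ne_zero (mul_ne_zero (pow_ne_zero 2 hz0) (eigenvalue_sub_add_one_ne_zero hz0 hμ)) hy₀
  exact exists_lt_norm_of_forall_add_eq_pow_mul hμ1 hc
    (two_step_combination_eq_pow_mul hμ hyhat hy (hyhat0.trans hy0.symm)) C
end

section
/- Let T > 0 and let f : ℝ × ℝ^d → ℝ^d be twice continuously differentiable with f and its first and second derivatives bounded. Let y : [0,T] → ℝ^d solve y'(t) = f(t, y(t)). Fix t ∈ [0,T) and initialise an asynchronous leapfrog step from the exact state (y, v) = (y(t), y'(t)): for step size Δt ∈ (0, T − t], define ŷ = y + vΔt/2, v̂ = f(t + Δt/2, ŷ), y⁺ = y + v̂ Δt, v⁺ = 2v̂ − v. Then there exists a constant C > 0, depending only on f (not on t or Δt), such that ‖y⁺ − y(t + Δt)‖ ≤ C Δt³ and ‖v⁺ − y'(t + Δt)‖ ≤ C Δt². (The asynchronous leapfrog method is a second-order method: the local truncation error in y is O(Δt³) and in v is O(Δt²).) -/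
/-!
Along the exact solution, `y'' = G` with `G u = DF(u, y u) (1, F (u, y u))`, and the bounds on
`F` and its first two derivatives make `y' = F (·, y)` and `G` Lipschitz with constants depending
only on the bound. Taylor expansion about the midpoint `m = t + Δt/2`, where the odd terms cancel,
shows that the midpoint rule `y t + Δt • y' m` and the central difference `2 • y' m - y' t` are
accurate to `O(Δt³)` and `O(Δt²)`. The leapfrog step uses the predicted `v̂ = F (m, ŷ)` instead of
`y' m`; since `ŷ = y m + O(Δt²)` and `F` is Lipschitz, this costs only `O(Δt²)` in `v̂`.
-/

open Set
open scoped NNReal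

section Taylor

variable {E : Type*} [NormedAddCommGroup E] [NormedSpace ℝ E] {s : Set ℝ}

theorem Convex.add_div_two_mem (hs : Convex ℝ s) {t h : ℝ} (ht : t ∈ s) (hth : t + h ∈ s) :
    t + h / 2 ∈ s := by
  simpa [smul_eq_mul, div_eq_inv_mul] using
    hs.add_smul_mem ht hth (t := 2⁻¹) ⟨by norm_num, by norm_num⟩

theorem Convex.norm_image_sub_le_of_norm_hasDerivWithin_le' {g g' : ℝ → E} (hs : Convex ℝ s)
    (hg : ∀ u ∈ s, HasDerivWithinAt g (g' u) s u) {v : E} {K : ℝ}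
    (hK : ∀ u ∈ s, ‖g' u - v‖ ≤ K) {c x : ℝ} (hc : c ∈ s) (hx : x ∈ s) :
    ‖g x - g c - (x - c) • v‖ ≤ K * ‖x - c‖ := by
  have hψ : ∀ u ∈ s, HasDerivWithinAt (fun u => g u - u • v) (g' u - v) s u := fun u hu => by
    simpa using (hg u hu).fun_sub ((hasDerivWithinAt_id u s).smul_const v)
  calc ‖g x - g c - (x - c) • v‖ = ‖(g x - x • v) - (g c - c • v)‖ := by
        rw [sub_smul]; abel_nf
    _ ≤ K * ‖x - c‖ := hs.norm_image_sub_le_of_norm_hasDerivWithin_le hψ hK hc hx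

theorem Convex.norm_taylor_remainder_one_le_of_lipschitzOnWith {g g' : ℝ → E} {L : ℝ≥0}
    (hs : Convex ℝ s)
    (hg : ∀ u ∈ s, HasDerivWithinAt g (g' u) s u) (hL : LipschitzOnWith L g' s)
    {c x : ℝ} (hc : c ∈ s) (hx : x ∈ s) :
    ‖g x - g c - (x - c) • g' c‖ ≤ L * (x - c) ^ 2 := by
  have hsub : uIcc c x ⊆ s := hs.ordConnected.uIcc_subset hc hx
  have hbound : ∀ u ∈ uIcc c x, ‖g' u - g' c‖ ≤ L * |x - c| := fun u hu =>
    hL.norm_sub_le_of_le (hsub hu) hc (abs_sub_left_of_mem_uIcc hu)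
  calc ‖g x - g c - (x - c) • g' c‖ ≤ L * |x - c| * ‖x - c‖ :=
        (convex_uIcc c x).norm_image_sub_le_of_norm_hasDerivWithin_le'
          (fun u hu => (hg u (hsub hu)).mono hsub) hbound left_mem_uIcc right_mem_uIcc
    _ = L * (x - c) ^ 2 := by rw [Real.norm_eq_abs, mul_assoc, ← sq, sq_abs]

theorem Convex.norm_taylor_remainder_two_le_of_lipschitzOnWith {y g G : ℝ → E} {L : ℝ≥0}
    (hs : Convex ℝ s)
    (hy : ∀ u ∈ s, HasDerivWithinAt y (g u) s u) (hg : ∀ u ∈ s, HasDerivWithinAt g (G u) s u)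
    (hL : LipschitzOnWith L G s) {c x : ℝ} (hc : c ∈ s) (hx : x ∈ s) :
    ‖y x - y c - (x - c) • g c - ((x - c) ^ 2 / 2) • G c‖ ≤ L * |x - c| ^ 3 := by
  have hsub : uIcc c x ⊆ s := hs.ordConnected.uIcc_subset hc hx
  have hφ : ∀ u ∈ uIcc c x, HasDerivWithinAt (fun u => y u - ((u - c) ^ 2 / 2) • G c)
      (g u - (u - c) • G c) (uIcc c x) u := fun u hu => by
    have hq : HasDerivAt (fun u : ℝ => (u - c) ^ 2 / 2) (u - c) u := by
      simpa using (((hasDerivAt_id u).sub_const c).pow 2).div_const 2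
    exact ((hy u (hsub hu)).mono hsub).sub (hq.smul_const (G c)).hasDerivWithinAt
  have hbound : ∀ u ∈ uIcc c x, ‖g u - (u - c) • G c - g c‖ ≤ L * (x - c) ^ 2 := fun u hu => by
    rw [sub_right_comm]
    refine (hs.norm_taylor_remainder_one_le_of_lipschitzOnWith hg hL hc (hsub hu)).trans ?_
    exact mul_le_mul_of_nonneg_left (sq_le_sq.2 (abs_sub_left_of_mem_uIcc hu)) L.2
  calc ‖y x - y c - (x - c) • g c - ((x - c) ^ 2 / 2) • G c‖
      = ‖(y x - ((x - c) ^ 2 / 2) • G c) - (y c - ((c - c) ^ 2 / 2) • G c) - (x - c) • g c‖ := by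
        congr 1; simp only [sub_self]; module
    _ ≤ L * (x - c) ^ 2 * ‖x - c‖ :=
        (convex_uIcc c x).norm_image_sub_le_of_norm_hasDerivWithin_le' hφ hbound left_mem_uIcc
          right_mem_uIcc
    _ = L * |x - c| ^ 3 := by rw [Real.norm_eq_abs, ← sq_abs]; ring

end Taylor

section Leapfrog

variable {E : Type*} [NormedAddCommGroup E] [NormedSpace ℝ E] {s : Set ℝ} {y g G : ℝ → E}
  {L : ℝ≥0} {t h δ : ℝ} {v : E}

theorem Convex.norm_leapfrog_position_error_le (hs : Convex ℝ s)
    (hy : ∀ u ∈ s, HasDerivWithinAt y (g u) s u) (hg : ∀ u ∈ s, HasDerivWithinAt g (G u) s u)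
    (hL : LipschitzOnWith L G s) (ht : t ∈ s) (hth : t + h ∈ s)
    (hv : ‖v - g (t + h / 2)‖ ≤ δ) :
    ‖y t + h • v - y (t + h)‖ ≤ |h| * δ + L * |h| ^ 3 / 4 := by
  set m := t + h / 2
  have hm : m ∈ s := hs.add_div_two_mem ht hth
  have hleft := hs.norm_taylor_remainder_two_le_of_lipschitzOnWith hy hg hL hm ht
  have hright := hs.norm_taylor_remainder_two_le_of_lipschitzOnWith hy hg hL hm hth
  calc ‖y t + h • v - y (t + h)‖
      = ‖h • (v - g m) + (y t - y m - (t - m) • g m - ((t - m) ^ 2 / 2) • G m)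
          - (y (t + h) - y m - (t + h - m) • g m - ((t + h - m) ^ 2 / 2) • G m)‖ := by
        congr 1; module
    _ ≤ |h| * δ + L * |t - m| ^ 3 + L * |t + h - m| ^ 3 := by
        refine norm_sub_le_of_le (norm_add_le_of_le ?_ hleft) hright
        rw [norm_smul, Real.norm_eq_abs]
        exact mul_le_mul_of_nonneg_left hv (abs_nonneg h)
    _ = |h| * δ + L * |h| ^ 3 / 4 := by
        rw [show t - m = -(h / 2) by ring, show t + h - m = h / 2 by ring, abs_neg, abs_div,
          abs_two]
        ring

theorem Convex.norm_leapfrog_velocity_error_le (hs : Convex ℝ s)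
    (hg : ∀ u ∈ s, HasDerivWithinAt g (G u) s u) (hL : LipschitzOnWith L G s)
    (ht : t ∈ s) (hth : t + h ∈ s) (hv : ‖v - g (t + h / 2)‖ ≤ δ) :
    ‖(2 : ℝ) • v - g t - g (t + h)‖ ≤ 2 * δ + L * h ^ 2 / 2 := by
  set m := t + h / 2
  have hm : m ∈ s := hs.add_div_two_mem ht hth
  have hleft := hs.norm_taylor_remainder_one_le_of_lipschitzOnWith hg hL hm ht
  have hright := hs.norm_taylor_remainder_one_le_of_lipschitzOnWith hg hL hm hth
  calc ‖(2 : ℝ) • v - g t - g (t + h)‖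
      = ‖(2 : ℝ) • (v - g m) - (g t - g m - (t - m) • G m)
          - (g (t + h) - g m - (t + h - m) • G m)‖ := by
        congr 1; module
    _ ≤ 2 * δ + L * (t - m) ^ 2 + L * (t + h - m) ^ 2 := by
        refine norm_sub_le_of_le (norm_sub_le_of_le ?_ hleft) hright
        rw [norm_smul, Real.norm_two]
        exact mul_le_mul_of_nonneg_left hv zero_le_two
    _ = 2 * δ + L * h ^ 2 / 2 := by ring

end Leapfrog

theorem LipschitzOnWith.clm_apply {𝕜 α X Y : Type*} [NontriviallyNormedField 𝕜]
    [SeminormedAddCommGroup α] [NormedAddCommGroup X] [NormedSpace 𝕜 X] [NormedAddCommGroup Y]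
    [NormedSpace 𝕜 Y] {A : α → X →L[𝕜] Y} {v : α → X} {s : Set α} {KA Kv CA Cv : ℝ≥0}
    (hA : LipschitzOnWith KA A s) (hv : LipschitzOnWith Kv v s) (hAb : ∀ u ∈ s, ‖A u‖ ≤ CA)
    (hvb : ∀ u ∈ s, ‖v u‖ ≤ Cv) :
    LipschitzOnWith (KA * Cv + CA * Kv) (fun u => A u (v u)) s := by
  refine lipschitzOnWith_iff_norm_sub_le.2 fun a ha b hb => ?_
  calc ‖A a (v a) - A b (v b)‖ = ‖(A a - A b) (v a) + A b (v a - v b)‖ := by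
        simp only [sub_apply, map_sub, sub_add_sub_cancel]
    _ ≤ KA * ‖a - b‖ * Cv + CA * (Kv * ‖a - b‖) :=
        norm_add_le_of_le ((A a - A b).le_opNorm _ |>.trans <|
            mul_le_mul (hA.norm_sub_le ha hb) (hvb a ha) (norm_nonneg _) (by positivity))
          ((A b).le_opNorm _ |>.trans <|
            mul_le_mul (hAb b hb) (hv.norm_sub_le ha hb) (norm_nonneg _) CA.2)
    _ = (KA * Cv + CA * Kv) * ‖a - b‖ := by ring

noncomputable def asyncLeapfrogStep {E : Type*} [AddCommGroup E] [Module ℝ E] (F : ℝ × E → E)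
    (h t : ℝ) (y v : E) : ℝ × E × E :=
  let vmid := F (t + h / 2, y + (h / 2) • v)
  (t + h, y + h • vmid, (2 : ℝ) • vmid - v)

section Trajectory

variable {E : Type*} [NormedAddCommGroup E] [NormedSpace ℝ E] {s : Set ℝ} {y y' : ℝ → E}
  {F : ℝ × E → E} {B : ℝ≥0} {t h : ℝ}

theorem Convex.lipschitzOnWith_graph_of_norm_hasDerivWithin_le (hs : Convex ℝ s)
    (hy : ∀ u ∈ s, HasDerivWithinAt y (y' u) s u) (hy' : ∀ u ∈ s, ‖y' u‖ ≤ B) (hB : 1 ≤ B) :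
    LipschitzOnWith B (fun u => (u, y u)) s := by
  simpa [max_eq_right hB] using LipschitzWith.id.lipschitzOnWith.prodMk
    (lipschitzOnWith_of_nnnorm_hasDerivWithin_le hs hy fun u hu => hy' u hu)

theorem Convex.lipschitzOnWith_fderiv_apply_along_solution (hs : Convex ℝ s) (hB : 1 ≤ B)
    (hF₀ : ∀ q, ‖F q‖ ≤ B) (hF₁ : ∀ q, ‖fderiv ℝ F q‖ ≤ B) (hFL : LipschitzWith B F)
    (hF'L : LipschitzWith B (fderiv ℝ F)) (hy : ∀ u ∈ s, HasDerivWithinAt y (F (u, y u)) s u) :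
    LipschitzOnWith (2 * B ^ 3) (fun u => fderiv ℝ F (u, y u) (1, F (u, y u))) s := by
  have hgraph := hs.lipschitzOnWith_graph_of_norm_hasDerivWithin_le hy (fun u _ => hF₀ _) hB
  have hv : LipschitzOnWith (1 * (B * B)) (fun u => ((1 : ℝ), F (u, y u))) s :=
    (LipschitzWith.prodMk_left 1).comp_lipschitzOnWith (hFL.comp_lipschitzOnWith hgraph)
  rw [show 2 * B ^ 3 = B * B * B + B * (1 * (B * B)) by ring]
  exact (hF'L.comp_lipschitzOnWith hgraph).clm_apply hv (fun u _ => hF₁ _)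
    fun u _ => norm_prod_le_iff.2 ⟨by simpa using hB, hF₀ _⟩

theorem Convex.norm_predictor_sub_le (hs : Convex ℝ s) (hB : 1 ≤ B) (hF₀ : ∀ q, ‖F q‖ ≤ B)
    (hFL : LipschitzWith B F) (hy : ∀ u ∈ s, HasDerivWithinAt y (F (u, y u)) s u)
    (ht : t ∈ s) (hth : t + h ∈ s) :
    ‖F (t + h / 2, y t + (h / 2) • F (t, y t)) - F (t + h / 2, y (t + h / 2))‖ ≤
      B ^ 3 * h ^ 2 / 4 := by
  have hgL : LipschitzOnWith (B * B) (fun u => F (u, y u)) s := hFL.comp_lipschitzOnWith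
    (hs.lipschitzOnWith_graph_of_norm_hasDerivWithin_le hy (fun u _ => hF₀ _) hB)
  have hyhat : ‖y t + (h / 2) • F (t, y t) - y (t + h / 2)‖ ≤ B ^ 2 * (h / 2) ^ 2 := by
    have := hs.norm_taylor_remainder_one_le_of_lipschitzOnWith hy hgL ht
      (hs.add_div_two_mem ht hth)
    rw [add_sub_cancel_left, sub_sub, NNReal.coe_mul, ← sq] at this
    rwa [norm_sub_rev]
  have hgap : ‖(t + h / 2, y t + (h / 2) • F (t, y t)) - (t + h / 2, y (t + h / 2))‖ ≤
      B ^ 2 * (h / 2) ^ 2 := by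
    rw [Prod.mk_sub_mk, sub_self]
    exact norm_prod_le_iff.2 ⟨by rw [norm_zero]; positivity, hyhat⟩
  refine (hFL.norm_sub_le_of_le hgap).trans_eq ?_
  ring

theorem Convex.norm_asyncLeapfrogStep_sub_le (hs : Convex ℝ s) (hB : 1 ≤ B)
    (hFd : Differentiable ℝ F) (hF₀ : ∀ q, ‖F q‖ ≤ B) (hF₁ : ∀ q, ‖fderiv ℝ F q‖ ≤ B)
    (hF'L : LipschitzWith B (fderiv ℝ F)) (hy : ∀ u ∈ s, HasDerivWithinAt y (F (u, y u)) s u)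
    (ht : t ∈ s) (hth : t + h ∈ s) :
    ‖(asyncLeapfrogStep F h t (y t) (F (t, y t))).2.1 - y (t + h)‖ ≤ 2 * B ^ 3 * |h| ^ 3 ∧
      ‖(asyncLeapfrogStep F h t (y t) (F (t, y t))).2.2 - F (t + h, y (t + h))‖ ≤
        2 * B ^ 3 * h ^ 2 := by
  have hFL : LipschitzWith B F := lipschitzWith_of_nnnorm_fderiv_le hFd fun q => hF₁ q
  have hg : ∀ u ∈ s, HasDerivWithinAt (fun u => F (u, y u))
      (fderiv ℝ F (u, y u) (1, F (u, y u))) s u := fun u hu =>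
    (hFd _).hasFDerivAt.comp_hasDerivWithinAt u ((hasDerivWithinAt_id u s).prodMk (hy u hu))
  have hGL := hs.lipschitzOnWith_fderiv_apply_along_solution hB hF₀ hF₁ hFL hF'L hy
  have hv := hs.norm_predictor_sub_le hB hF₀ hFL hy ht hth
  refine ⟨(hs.norm_leapfrog_position_error_le hy hg hGL ht hth hv).trans ?_,
    (hs.norm_leapfrog_velocity_error_le hg hGL ht hth hv).trans ?_⟩
  · rw [← sub_nonneg, ← sq_abs h]; push_cast; ring_nf; positivity
  · rw [← sub_nonneg]; push_cast; ring_nf; positivity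

end Trajectory

/-- **The asynchronous leapfrog method is a second-order method.** For a C² vector field `f`
that is bounded with bounded first and second derivatives, a single asynchronous leapfrog
step started from the exact state `(y(t), y'(t))` of a solution `y` of `y' = f(t, y(t))` has
local truncation error `O(Δt³)` in `y` and `O(Δt²)` in `v`, with a constant depending only
on `f`. Here `ŷ = y + vΔt/2`, `v̂ = f(t + Δt/2, ŷ)`, `y⁺ = y + v̂Δt`, `v⁺ = 2v̂ − v`. -/
theorem asynchronous_leapfrog_local_truncation_error
    (d : ℕ) (f : ℝ → (Fin d → ℝ) → (Fin d → ℝ))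
    (hf : ContDiff ℝ 2 (Function.uncurry f))
    (hbdd : ∃ B : ℝ, ∀ i : ℕ, i ≤ 2 → ∀ q : ℝ × (Fin d → ℝ),
      ‖iteratedFDeriv ℝ i (Function.uncurry f) q‖ ≤ B) :
    ∃ C > 0, ∀ T : ℝ, 0 < T →
      ∀ y : ℝ → Fin d → ℝ,
        (∀ t ∈ Set.Icc (0:ℝ) T, HasDerivWithinAt y (f t (y t)) (Set.Icc 0 T) t) →
        ∀ t ∈ Set.Ico (0:ℝ) T, ∀ Δt : ℝ, 0 < Δt → Δt ≤ T - t →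
          ‖(y t + Δt • f (t + Δt / 2) (y t + (Δt / 2) • f t (y t))) - y (t + Δt)‖
              ≤ C * Δt ^ 3 ∧
          ‖((2:ℝ) • f (t + Δt / 2) (y t + (Δt / 2) • f t (y t)) - f t (y t))
              - f (t + Δt) (y (t + Δt))‖ ≤ C * Δt ^ 2 := by
  set F := Function.uncurry f
  obtain ⟨B, hB1, hB⟩ : ∃ B : ℝ≥0, 1 ≤ B ∧ ∀ i ≤ 2, ∀ q, ‖iteratedFDeriv ℝ i F q‖ ≤ B := by
    obtain ⟨B, hB⟩ := hbdd
    exact ⟨⟨max 1 B, by positivity⟩, le_max_left 1 B,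
      fun i hi q => (hB i hi q).trans (le_max_right 1 B)⟩
  have hF₀ : ∀ q, ‖F q‖ ≤ B := by simpa using hB 0 (by norm_num)
  have hF₁ : ∀ q, ‖fderiv ℝ F q‖ ≤ B := by
    simpa [← norm_iteratedFDeriv_fderiv] using hB 1 (by norm_num)
  have hF₂ : ∀ q, ‖fderiv ℝ (fderiv ℝ F) q‖ ≤ B := by
    simpa [← norm_iteratedFDeriv_fderiv] using hB 2 le_rfl
  have hF'L : LipschitzWith B (fderiv ℝ F) :=
    lipschitzWith_of_nnnorm_fderiv_le ((hf.fderiv_right (by norm_num)).differentiable one_ne_zero)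
      fun q => hF₂ q
  refine ⟨2 * B ^ 3, by positivity, fun T _ y hy t ht h hh hhT => ?_⟩
  have hth : t + h ∈ Icc 0 T := ⟨by linarith [ht.1], by linarith⟩
  obtain ⟨hpos, hvel⟩ := (convex_Icc 0 T).norm_asyncLeapfrogStep_sub_le hB1
    (hf.differentiable two_ne_zero) hF₀ hF₁ hF'L hy (Ico_subset_Icc_self ht) hth
  rw [abs_of_pos hh] at hpos
  exact ⟨hpos, hvel⟩
end

section
/- Let T > 0, d ∈ ℕ and C > 0. Let (x_n)_{n∈ℕ} be a sequence of continuously differentiable functions x_n : [0,T] → ℝ^d such that for every n, sup_{t∈[0,T]} ‖x_n(t)‖ + sup_{t∈[0,T]} ‖x_n'(t)‖ + TV(x_n'; [0,T]) ≤ C, where TV denotes total variation on [0,T]. Then there exist a subsequence (x_{n_k}) and a Lipschitz continuous function x : [0,T] → ℝ^d of bounded variation such that sup_{t∈[0,T]} ‖x_{n_k}(t) − x(t)‖ → 0 and TV(x_{n_k} − x; [0,T]) → 0 as k → ∞. (A family of paths that is bounded in sup norm, with derivatives bounded in sup norm and of uniformly bounded variation, is relatively compact with respect to the norm ‖·‖_∞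 + |·|_BV.) -/
/-!
Helly's selection theorem, applied to the Jordan decompositions of the components of `x' n`,
gives a subsequence along which the derivatives converge outside a countable set, hence almost
everywhere, to a bounded function `v`; a further subsequence makes `x n 0` converge to some `x₀`.
The limit path is `x₀ + ∫₀ᵗ v`. Since `x n - xlim` is a primitive of `x' n - v`, its variation on
`[0,T]` is at most `∫₀ᵀ ‖x' n - v‖`, which tends to `0` by dominated convergence; uniform
convergence follows from the convergence at `0` together with the variation bound.
-/

open Filter

open Set MeasureTheory Topology

theorem eVariationOn_le_of_edist_le {α E F : Type*} [LinearOrder α] [PseudoEMetricSpace E]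
    [PseudoEMetricSpace F] {f : α → E} {g : α → F} {s : Set α}
    (h : ∀ x ∈ s, ∀ y ∈ s, x ≤ y → edist (f x) (f y) ≤ edist (g x) (g y)) :
    eVariationOn f s ≤ eVariationOn g s :=
  iSup_le fun ⟨_, _, hu, us⟩ => (Finset.sum_le_sum fun i _ => (edist_comm _ _).trans_le <|
      (h _ (us i) _ (us (i + 1)) (hu i.le_succ)).trans_eq (edist_comm _ _)).trans
    (eVariationOn.sum_le (f := g) hu us)

theorem tendstoUniformlyOn_of_tendsto_eVariationOn {α ι E : Type*} [LinearOrder α]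
    [NormedAddCommGroup E] {F : ι → α → E} {f : α → E} {s : Set α} {l : Filter ι} {a : α}
    (ha : a ∈ s) (hFa : Tendsto (fun i => F i a) l (𝓝 (f a)))
    (hvar : Tendsto (fun i => eVariationOn (fun t => F i t - f t) s) l (𝓝 0)) :
    TendstoUniformlyOn F f l s := by
  have hsum : Tendsto (fun i => eVariationOn (fun t => F i t - f t) s + edist (F i a) (f a))
      l (𝓝 0) := by
    simpa using hvar.add (hFa.edist (tendsto_const_nhds (x := f a)))
  refine EMetric.tendstoUniformlyOn_iff.2 fun ε hε => ?_
  filter_upwards [hsum.eventually (gt_mem_nhds hε)] with i hi t ht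
  refine lt_of_le_of_lt ?_ hi
  calc edist (f t) (F i t) = edist (F i t - f t) 0 := by
        rw [edist_comm, edist_eq_enorm_sub, edist_zero_right]
    _ ≤ edist (F i t - f t) (F i a - f a) + edist (F i a - f a) 0 := edist_triangle _ _ _
    _ ≤ _ := by
        rw [edist_zero_right, ← edist_eq_enorm_sub, edist_comm]
        exact add_le_add_left (eVariationOn.edist_le _ ha ht) _

section Primitive

variable {E : Type*} [NormedAddCommGroup E] [NormedSpace ℝ E] {f g : ℝ → E} {a b : ℝ}

theorem sub_eq_integral_of_hasDerivWithinAt_Icc [CompleteSpace E] {f' : ℝ → E}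
    (hf : ∀ t ∈ Icc a b, HasDerivWithinAt f (f' t) (Icc a b) t)
    (hf' : IntegrableOn f' (Icc a b)) :
    ∀ p ∈ Icc a b, ∀ q ∈ Icc a b, p ≤ q → f q - f p = ∫ t in p..q, f' t := by
  intro p hp q hq hpq
  have hsub : Icc p q ⊆ Icc a b := Icc_subset_Icc hp.1 hq.2
  refine (intervalIntegral.integral_eq_sub_of_hasDerivAt_of_le hpq
    (fun t ht => (hf t (hsub ht)).continuousWithinAt.mono hsub) (fun t ht => ?_)
    ((intervalIntegrable_iff_integrableOn_Icc_of_le hpq).2 (hf'.mono_set hsub))).symm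
  exact (hf t (hsub (Ioo_subset_Icc_self ht))).hasDerivAt
    (Icc_mem_nhds (hp.1.trans_lt ht.1) (ht.2.trans_le hq.2))

theorem integral_sub_integral_of_integrableOn_Icc (hg : IntegrableOn g (Icc a b)) :
    ∀ p ∈ Icc a b, ∀ q ∈ Icc a b, (∫ t in a..q, g t) - ∫ t in a..p, g t = ∫ t in p..q, g t :=
  fun _ hp _ hq =>
    have ha : a ∈ Icc a b := left_mem_Icc.2 (hp.1.trans hp.2)
    intervalIntegral.integral_interval_sub_left
      (hg.mono_set (uIcc_subset_Icc ha hq)).intervalIntegrable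
      (hg.mono_set (uIcc_subset_Icc ha hp)).intervalIntegrable

theorem eVariationOn_Icc_le_integral_norm_of_sub_eq_integral (hab : a ≤ b)
    (hg : IntegrableOn g (Icc a b))
    (hfg : ∀ p ∈ Icc a b, ∀ q ∈ Icc a b, p ≤ q → f q - f p = ∫ t in p..q, g t) :
    eVariationOn f (Icc a b) ≤ ENNReal.ofReal (∫ t in a..b, ‖g t‖) := by
  set H : ℝ → ℝ := fun t => ∫ s in a..t, ‖g s‖
  have hH : ∀ p ∈ Icc a b, ∀ q ∈ Icc a b, H q - H p = ∫ t in p..q, ‖g t‖ :=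
    integral_sub_integral_of_integrableOn_Icc hg.norm
  have hH_nonneg : ∀ p ∈ Icc a b, ∀ q ∈ Icc a b, p ≤ q → 0 ≤ H q - H p :=
    fun p hp q hq hpq => (hH p hp q hq).symm ▸
      intervalIntegral.integral_nonneg hpq fun _ _ => norm_nonneg _
  calc eVariationOn f (Icc a b) ≤ eVariationOn H (Icc a b) := by
        refine eVariationOn_le_of_edist_le fun p hp q hq hpq => ?_
        rw [edist_dist, edist_dist, dist_eq_norm', hfg p hp q hq hpq, Real.dist_eq,
          abs_sub_comm, abs_of_nonneg (hH_nonneg p hp q hq hpq), hH p hp q hq]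
        exact ENNReal.ofReal_le_ofReal (intervalIntegral.norm_integral_le_integral_norm hpq)
    _ = ENNReal.ofReal (H b - H a) :=
        inter_self (Icc a b) ▸ MonotoneOn.eVariationOn_eq
          (fun p hp q hq hpq => sub_nonneg.1 (hH_nonneg p hp q hq hpq))
          (left_mem_Icc.2 hab) (right_mem_Icc.2 hab)
    _ = ENNReal.ofReal (∫ t in a..b, ‖g t‖) := by simp [H]

theorem lipschitzOnWith_of_sub_eq_integral {C : ℝ}
    (hgC : ∀ᵐ t ∂volume.restrict (Icc a b), ‖g t‖ ≤ C)
    (hfg : ∀ p ∈ Icc a b, ∀ q ∈ Icc a b, p ≤ q → f q - f p = ∫ t in p..q, g t) :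
    LipschitzOnWith (Real.toNNReal C) f (Icc a b) := by
  refine LipschitzOnWith.of_dist_le_mul fun p hp q hq => ?_
  wlog hpq : q ≤ p generalizing p q
  · rw [dist_comm, dist_comm p]; exact this q hq p hp (le_of_not_ge hpq)
  rw [dist_eq_norm, hfg q hq p hp hpq, Real.dist_eq, Real.coe_toNNReal']
  refine intervalIntegral.norm_integral_le_of_norm_le_const_ae ?_
  filter_upwards [(ae_restrict_iff' measurableSet_Icc).1 hgC] with t ht hmem
  exact (ht (uIoc_subset_uIcc.trans (uIcc_subset_Icc hq hp) hmem)).trans (le_max_left _ _)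

end Primitive

section Limit

variable {E : Type*} [NormedAddCommGroup E]

theorem ae_norm_le_of_tendsto {α : Type*} [MeasurableSpace α] {μ : Measure α}
    {g : ℕ → α → E} {v : α → E} {C : ℝ} (hgC : ∀ k, ∀ᵐ t ∂μ, ‖g k t‖ ≤ C)
    (hgv : ∀ᵐ t ∂μ, Tendsto (fun k => g k t) atTop (𝓝 (v t))) :
    ∀ᵐ t ∂μ, ‖v t‖ ≤ C := by
  filter_upwards [hgv, ae_all_iff.2 hgC] with t ht htC
  exact le_of_tendsto' ht.norm htC

theorem integrable_of_tendsto_ae {α : Type*} [MeasurableSpace α] {μ : Measure α}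
    [IsFiniteMeasure μ] {g : ℕ → α → E} {v : α → E} {C : ℝ}
    (hg : ∀ k, AEStronglyMeasurable (g k) μ) (hgC : ∀ k, ∀ᵐ t ∂μ, ‖g k t‖ ≤ C)
    (hgv : ∀ᵐ t ∂μ, Tendsto (fun k => g k t) atTop (𝓝 (v t))) :
    Integrable v μ :=
  .of_bound (aestronglyMeasurable_of_tendsto_ae _ hg hgv) C (ae_norm_le_of_tendsto hgC hgv)

variable {a b C : ℝ} {g : ℕ → ℝ → E} {v : ℝ → E}

theorem tendsto_intervalIntegral_norm_sub_of_tendsto_ae (hab : a ≤ b)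
    (hg : ∀ k, AEStronglyMeasurable (g k) (volume.restrict (Icc a b)))
    (hgC : ∀ k, ∀ᵐ t ∂volume.restrict (Icc a b), ‖g k t‖ ≤ C)
    (hgv : ∀ᵐ t ∂volume.restrict (Icc a b), Tendsto (fun k => g k t) atTop (𝓝 (v t))) :
    Tendsto (fun k => ∫ t in a..b, ‖g k t - v t‖) atTop (𝓝 0) := by
  have hvC := ae_norm_le_of_tendsto hgC hgv
  have hv := aestronglyMeasurable_of_tendsto_ae _ hg hgv
  simp only [intervalIntegral.integral_of_le hab, ← integral_Icc_eq_integral_Ioc]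
  simpa using tendsto_integral_of_dominated_convergence (f := fun _ => (0 : ℝ)) (fun _ => C + C)
    (fun k => ((hg k).sub hv).norm) (integrable_const _)
    (fun k => by
      filter_upwards [hgC k, hvC] with t h1 h2
      rw [norm_norm]
      exact (norm_sub_le _ _).trans (add_le_add h1 h2))
    (by filter_upwards [hgv] with t ht using by simpa using (ht.sub_const (v t)).norm)

theorem tendsto_eVariationOn_sub_primitive [NormedSpace ℝ E] (hab : a ≤ b) {y : ℕ → ℝ → E}
    (hg : ∀ k, AEStronglyMeasurable (g k) (volume.restrict (Icc a b)))
    (hgC : ∀ k, ∀ᵐ t ∂volume.restrict (Icc a b), ‖g k t‖ ≤ C)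
    (hgv : ∀ᵐ t ∂volume.restrict (Icc a b), Tendsto (fun k => g k t) atTop (𝓝 (v t)))
    (hy : ∀ k, ∀ p ∈ Icc a b, ∀ q ∈ Icc a b, p ≤ q → y k q - y k p = ∫ t in p..q, g k t)
    (y₀ : E) :
    Tendsto (fun k => eVariationOn (fun t => y k t - (y₀ + ∫ s in a..t, v s)) (Icc a b))
      atTop (𝓝 0) := by
  have hgi : ∀ k, IntegrableOn (g k) (Icc a b) := fun k => Integrable.of_bound (hg k) C (hgC k)
  have hv : IntegrableOn v (Icc a b) := integrable_of_tendsto_ae hg hgC hgv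
  have hL1 : Tendsto (fun k => ENNReal.ofReal (∫ t in a..b, ‖g k t - v t‖)) atTop (𝓝 0) := by
    simpa using ENNReal.tendsto_ofReal
      (tendsto_intervalIntegral_norm_sub_of_tendsto_ae hab hg hgC hgv)
  refine tendsto_of_tendsto_of_tendsto_of_le_of_le tendsto_const_nhds hL1
    (fun _ => zero_le) fun k =>
      eVariationOn_Icc_le_integral_norm_of_sub_eq_integral hab ((hgi k).sub hv)
        fun p hp q hq hpq => ?_
  have hsub : uIcc p q ⊆ Icc a b := uIcc_subset_Icc hp hq
  rw [intervalIntegral.integral_sub ((hgi k).mono_set hsub).intervalIntegrable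
    (hv.mono_set hsub).intervalIntegrable, ← hy k p hp q hq hpq,
    ← integral_sub_integral_of_integrableOn_Icc hv p hp q hq]
  abel

theorem exists_lipschitzOnWith_tendsto_of_tendsto_ae_deriv [NormedSpace ℝ E] [CompleteSpace E]
    (hab : a ≤ b) {y : ℕ → ℝ → E} {y₀ : E}
    (hy : ∀ k, ∀ t ∈ Icc a b, HasDerivWithinAt (y k) (g k t) (Icc a b) t)
    (hg : ∀ k, ContinuousOn (g k) (Icc a b)) (hgC : ∀ k, ∀ t ∈ Icc a b, ‖g k t‖ ≤ C)
    (hgv : ∀ᵐ t ∂volume.restrict (Icc a b), Tendsto (fun k => g k t) atTop (𝓝 (v t)))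
    (hy₀ : Tendsto (fun k => y k a) atTop (𝓝 y₀)) :
    ∃ ylim : ℝ → E, LipschitzOnWith (Real.toNNReal C) ylim (Icc a b) ∧
      TendstoUniformlyOn y ylim atTop (Icc a b) ∧
      Tendsto (fun k => eVariationOn (fun t => y k t - ylim t) (Icc a b)) atTop (𝓝 0) := by
  have hgm : ∀ k, AEStronglyMeasurable (g k) (volume.restrict (Icc a b)) :=
    fun k => (hg k).aestronglyMeasurable measurableSet_Icc
  have hgC' : ∀ k, ∀ᵐ t ∂volume.restrict (Icc a b), ‖g k t‖ ≤ C :=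
    fun k => (ae_restrict_iff' measurableSet_Icc).2 (ae_of_all _ (hgC k))
  have hvar := tendsto_eVariationOn_sub_primitive hab hgm hgC' hgv
    (fun k => sub_eq_integral_of_hasDerivWithinAt_Icc (hy k) (hg k).integrableOn_Icc) y₀
  refine ⟨fun t => y₀ + ∫ s in a..t, v s,
    lipschitzOnWith_of_sub_eq_integral (ae_norm_le_of_tendsto hgC' hgv) fun p hp q hq _ => ?_,
    tendstoUniformlyOn_of_tendsto_eVariationOn (left_mem_Icc.2 hab) (by simpa using hy₀) hvar,
    hvar⟩
  rw [add_sub_add_left_eq_sub]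
  exact integral_sub_integral_of_integrableOn_Icc (integrable_of_tendsto_ae hgm hgC' hgv) p hp q hq

end Limit

theorem exists_strictMono_tendsto_of_forall_abs_le {ι : Type*} [Countable ι]
    {F : ℕ → ι → ℝ} {B : ℝ} (hF : ∀ n i, |F n i| ≤ B) :
    ∃ φ : ℕ → ℕ, StrictMono φ ∧ ∃ G : ι → ℝ,
      ∀ i, Tendsto (fun k => F (φ k) i) atTop (𝓝 (G i)) := by
  obtain ⟨G, -, φ, hφ, hFG⟩ := (isCompact_univ_pi fun _ : ι => isCompact_Icc).tendsto_subseq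
    fun n => mem_univ_pi.2 fun i => abs_le.1 (hF n i)
  exact ⟨φ, hφ, G, tendsto_pi_nhds.1 hFG⟩

theorem exists_monotone_tendsto_of_tendsto_dense {κ : Type*} {a b B : ℝ} {h : ℕ → ℝ → ℝ}
    (hmono : ∀ n, MonotoneOn (h n) (Icc a b)) (hB : ∀ n, ∀ t ∈ Icc a b, |h n t| ≤ B)
    {u : κ → ℝ} (hu : ∀ j, u j ∈ Icc a b)
    (hdense : ∀ s ∈ Icc a b, ∀ t ∈ Icc a b, s < t → ∃ j, u j ∈ Ioo s t)
    {G : κ → ℝ} (hG : ∀ j, Tendsto (fun n => h n (u j)) atTop (𝓝 (G j))) :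
    ∃ g : ℝ → ℝ, Monotone g ∧
      ∀ t ∈ Ioo a b, ContinuousAt g t → Tendsto (fun n => h n t) atTop (𝓝 (g t)) := by
  -- `g t` is the infimum of the limits `G j` at the points `u j` to the right of `t`; the bound
  -- `B` is added so that the infimum is taken over a nonempty set also for `t ≥ b`.
  set S : ℝ → Set ℝ := fun t => insert B (G '' {j | t < u j})
  have hbdd : ∀ t, BddBelow (S t) := fun t => bddBelow_insert.2
    ⟨-B, by
      rintro _ ⟨j, -, rfl⟩
      exact ge_of_tendsto' (hG j) fun n => neg_le_of_abs_le (hB n _ (hu j))⟩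
  refine ⟨fun t => sInf (S t), fun s t hst => csInf_le_csInf (hbdd s) (insert_nonempty _ _)
    (insert_subset_insert (image_mono fun j hj => hst.trans_lt hj)), fun t ht hcont => ?_⟩
  have htI : t ∈ Icc a b := Ioo_subset_Icc_self ht
  refine tendsto_order.2 ⟨fun l hl => ?_, fun r hr => ?_⟩
  · obtain ⟨s, hls, hs⟩ := ((hcont.tendsto.mono_left nhdsWithin_le_nhds).eventually
      (lt_mem_nhds hl)).and (Ioo_mem_nhdsLT ht.1) |>.exists
    obtain ⟨j, hj⟩ := hdense s (Ioo_subset_Icc_self ⟨hs.1, hs.2.trans ht.2⟩) t htI hs.2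
    have hlG : l < G j := hls.trans_le (csInf_le (hbdd s) (mem_insert_of_mem _ ⟨j, hj.1, rfl⟩))
    filter_upwards [(hG j).eventually (lt_mem_nhds hlG)] with n hn
    exact hn.trans_le (hmono n (hu j) htI hj.2.le)
  · obtain ⟨y, hy, hyr⟩ := exists_lt_of_csInf_lt (insert_nonempty _ _) hr
    rcases hy with rfl | ⟨j, hj, rfl⟩
    · exact Eventually.of_forall fun n => (le_of_abs_le (hB n t htI)).trans_lt hyr
    · filter_upwards [(hG j).eventually (gt_mem_nhds hyr)] with n hn
      exact (hmono n htI (hu j) (le_of_lt hj)).trans_lt hn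

theorem exists_strictMono_tendsto_of_monotoneOn {ι : Type*} [Countable ι] {a b B : ℝ}
    {h : ℕ → ι → ℝ → ℝ} (hmono : ∀ n i, MonotoneOn (h n i) (Icc a b))
    (hB : ∀ n i, ∀ t ∈ Icc a b, |h n i t| ≤ B) :
    ∃ φ : ℕ → ℕ, StrictMono φ ∧ ∃ g : ι → ℝ → ℝ, (∀ i, Monotone (g i)) ∧
      ∀ i, ∀ t ∈ Ioo a b, ContinuousAt (g i) t →
        Tendsto (fun k => h (φ k) i t) atTop (𝓝 (g i t)) := by
  obtain ⟨φ, hφ, G, hG⟩ := exists_strictMono_tendsto_of_forall_abs_le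
    (F := fun n (p : ι × {q : ℚ // (q : ℝ) ∈ Icc a b}) => h n p.1 p.2) fun n p => hB n _ _ p.2.2
  have hdense : ∀ s ∈ Icc a b, ∀ t ∈ Icc a b, s < t →
      ∃ q : {q : ℚ // (q : ℝ) ∈ Icc a b}, (q : ℝ) ∈ Ioo s t := fun s hs t ht hst => by
    obtain ⟨q, hsq, hqt⟩ := exists_rat_btwn hst
    exact ⟨⟨q, hs.1.trans hsq.le, hqt.le.trans ht.2⟩, hsq, hqt⟩
  choose g hg using fun i => exists_monotone_tendsto_of_tendsto_dense
    (fun k => hmono (φ k) i) (fun k => hB (φ k) i) (fun q => q.2) hdense fun q => hG (i, q)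
  exact ⟨φ, hφ, g, fun i => (hg i).1, fun i => (hg i).2⟩

theorem exists_monotoneOn_sub_monotoneOn_of_abs_le {α : Type*} [LinearOrder α] {f : α → ℝ}
    {s : Set α} {a : α} (ha : IsLeast s a) {B : ℝ} (hfB : ∀ t ∈ s, |f t| ≤ B)
    (hvar : eVariationOn f s ≤ ENNReal.ofReal B) :
    ∃ p q : α → ℝ, MonotoneOn p s ∧ MonotoneOn q s ∧ f = p - q ∧
      ∀ t ∈ s, |p t| ≤ 2 * B ∧ |q t| ≤ 2 * B := by
  have hf : LocallyBoundedVariationOn f s :=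
    BoundedVariationOn.locallyBoundedVariationOn (ne_top_of_le_ne_top ENNReal.ofReal_ne_top hvar)
  have hB : 0 ≤ B := (abs_nonneg _).trans (hfB a ha.1)
  have hp : ∀ t ∈ s, |variationOnFromTo f s a t| ≤ B := fun t ht => by
    rw [variationOnFromTo.eq_of_le f s (ha.2 ht), ENNReal.abs_toReal]
    exact ENNReal.toReal_le_of_le_ofReal hB ((eVariationOn.mono f inter_subset_left).trans hvar)
  refine ⟨variationOnFromTo f s a, variationOnFromTo f s a - f,
    variationOnFromTo.monotoneOn hf ha.1, variationOnFromTo.sub_self_monotoneOn hf ha.1,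
    (sub_sub_cancel _ _).symm, fun t ht => ⟨(hp t ht).trans (by linarith), ?_⟩⟩
  calc |variationOnFromTo f s a t - f t| ≤ |variationOnFromTo f s a t| + |f t| := abs_sub _ _
    _ ≤ 2 * B := by linarith [hp t ht, hfB t ht]

theorem exists_strictMono_tendsto_of_eVariationOn_le {ι : Type*} [Fintype ι] {a b B : ℝ}
    (hab : a ≤ b) {f : ℕ → ℝ → ι → ℝ} (hfB : ∀ n, ∀ t ∈ Icc a b, ‖f n t‖ ≤ B)
    (hvar : ∀ n, eVariationOn (f n) (Icc a b) ≤ ENNReal.ofReal B) :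
    ∃ φ : ℕ → ℕ, StrictMono φ ∧ ∃ (v : ℝ → ι → ℝ) (D : Set ℝ), D.Countable ∧
      ∀ t ∈ Ioo a b \ D, Tendsto (fun k => f (φ k) t) atTop (𝓝 (v t)) := by
  have hvari : ∀ n i, eVariationOn (fun t => f n t i) (Icc a b) ≤ ENNReal.ofReal B :=
    fun n i => ((LipschitzWith.eval i).lipschitzOnWith (s := univ)).comp_eVariationOn_le
      (mapsTo_univ (f n) (Icc a b)) |>.trans (by simpa using hvar n)
  choose p q hp hq hpq hpqB using fun n i => exists_monotoneOn_sub_monotoneOn_of_abs_le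
    (isLeast_Icc hab) (fun t ht => (Real.norm_eq_abs _ ▸ norm_le_pi_norm (f n t) i).trans
      (hfB n t ht)) (hvari n i)
  obtain ⟨φ₁, hφ₁, gp, hgp, hp_lim⟩ :=
    exists_strictMono_tendsto_of_monotoneOn hp fun n i t ht => (hpqB n i t ht).1
  obtain ⟨φ₂, hφ₂, gq, hgq, hq_lim⟩ := exists_strictMono_tendsto_of_monotoneOn
    (fun n => hq (φ₁ n)) fun n i t ht => (hpqB (φ₁ n) i t ht).2
  refine ⟨φ₁ ∘ φ₂, hφ₁.comp hφ₂, fun t i => gp i t - gq i t,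
    ⋃ i, {t | ¬ContinuousAt (gp i) t} ∪ {t | ¬ContinuousAt (gq i) t},
    countable_iUnion fun i =>
      (hgp i).countable_not_continuousAt.union (hgq i).countable_not_continuousAt,
    fun t ht => tendsto_pi_nhds.2 fun i => ?_⟩
  simp only [Set.mem_sdiff, mem_iUnion, mem_union, mem_ofPred_eq, not_exists, not_or,
    not_not] at ht
  have hf : ∀ k, f (φ₁ (φ₂ k)) t i = p (φ₁ (φ₂ k)) i t - q (φ₁ (φ₂ k)) i t :=
    fun k => congrFun (hpq _ i) t
  simpa only [Function.comp_apply, hf] using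
    ((hp_lim i t ht.1 (ht.2 i).1).comp hφ₂.tendsto_atTop).sub (hq_lim i t ht.1 (ht.2 i).2)

theorem norm_le_biSup_norm_of_continuousOn {α E : Type*} [TopologicalSpace α]
    [SeminormedAddCommGroup E] {f : α → E} {s : Set α} (hs : IsCompact s)
    (hf : ContinuousOn f s) {t : α} (ht : t ∈ s) :
    ‖f t‖ ≤ ⨆ t ∈ s, ‖f t‖ :=
  le_ciSup₂ (f := fun t (_ : t ∈ s) => ‖f t‖) ((hs.image_of_continuousOn hf.norm).bddAbove.mono
    (iUnion_subset fun _ => range_subset_iff.2 fun ht => mem_image_of_mem (fun t => ‖f t‖) ht)) t ht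

/-- **Relative compactness of uniformly bounded families of paths with derivatives of
uniformly bounded variation.** If continuously differentiable paths `x n : [0,T] → ℝ^d`
satisfy `sup‖x n‖ + sup‖(x n)'‖ + TV((x n)'; [0,T]) ≤ C` uniformly in `n`, then some
subsequence converges, both uniformly on `[0,T]` and in bounded-variation seminorm, to a
Lipschitz continuous path of bounded variation. -/
theorem bounded_derivative_variation_paths_relatively_compact
    (T : ℝ) (hT : 0 < T) (d : ℕ) (C : ℝ) (hC : 0 < C)
    (x x' : ℕ → ℝ → Fin d → ℝ)
    (hderiv : ∀ n, ∀ t ∈ Set.Icc (0:ℝ) T,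
      HasDerivWithinAt (x n) (x' n t) (Set.Icc 0 T) t)
    (hcont : ∀ n, ContinuousOn (x' n) (Set.Icc (0:ℝ) T))
    (hBV : ∀ n, BoundedVariationOn (x' n) (Set.Icc (0:ℝ) T))
    (hbound : ∀ n,
      (⨆ t ∈ Set.Icc (0:ℝ) T, ‖x n t‖) + (⨆ t ∈ Set.Icc (0:ℝ) T, ‖x' n t‖)
        + (eVariationOn (x' n) (Set.Icc (0:ℝ) T)).toReal ≤ C) :
    ∃ φ : ℕ → ℕ, StrictMono φ ∧
      ∃ (xlim : ℝ → Fin d → ℝ) (K : NNReal),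
        LipschitzOnWith K xlim (Set.Icc (0:ℝ) T) ∧
        BoundedVariationOn xlim (Set.Icc (0:ℝ) T) ∧
        TendstoUniformlyOn (fun k => x (φ k)) xlim atTop (Set.Icc (0:ℝ) T) ∧
        Tendsto (fun k => eVariationOn (fun t => x (φ k) t - xlim t) (Set.Icc (0:ℝ) T))
          atTop (nhds 0) := by
  have h0 : (0 : ℝ) ∈ Icc 0 T := left_mem_Icc.2 hT.le
  have hsup_nonneg : ∀ f : ℝ → Fin d → ℝ, 0 ≤ ⨆ t ∈ Icc (0 : ℝ) T, ‖f t‖ :=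
    fun f => Real.iSup_nonneg fun _ => Real.iSup_nonneg fun _ => norm_nonneg _
  have hx₀C : ∀ n, ‖x n 0‖ ≤ C := fun n =>
    (norm_le_biSup_norm_of_continuousOn isCompact_Icc
      (fun t ht => (hderiv n t ht).continuousWithinAt) h0).trans
    (by linarith [hbound n, hsup_nonneg (x' n), (eVariationOn (x' n) (Icc 0 T)).toReal_nonneg])
  have hx'C : ∀ n, ∀ t ∈ Icc (0 : ℝ) T, ‖x' n t‖ ≤ C := fun n t ht =>
    (norm_le_biSup_norm_of_continuousOn isCompact_Icc (hcont n) ht).trans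
    (by linarith [hbound n, hsup_nonneg (x n), (eVariationOn (x' n) (Icc 0 T)).toReal_nonneg])
  have hvarC : ∀ n, eVariationOn (x' n) (Icc 0 T) ≤ ENNReal.ofReal C := fun n =>
    (ENNReal.le_ofReal_iff_toReal_le (hBV n) hC.le).2
      (by linarith [hbound n, hsup_nonneg (x n), hsup_nonneg (x' n)])
  obtain ⟨φ, hφ, v, D, hD, hv⟩ := exists_strictMono_tendsto_of_eVariationOn_le hT.le hx'C hvarC
  obtain ⟨x₀, -, ψ, hψ, hx₀⟩ := tendsto_subseq_of_bounded (Metric.isBounded_closedBall (x := 0))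
    fun k => mem_closedBall_zero_iff.2 (hx₀C (φ k))
  have hgv : ∀ᵐ t ∂volume.restrict (Icc 0 T),
      Tendsto (fun k => x' (φ (ψ k)) t) atTop (𝓝 (v t)) := by
    rw [← Measure.restrict_congr_set Ioo_ae_eq_Icc, ae_restrict_iff' measurableSet_Ioo]
    filter_upwards [hD.ae_notMem volume] with t htD htI
    exact (hv t ⟨htI, htD⟩).comp hψ.tendsto_atTop
  obtain ⟨xlim, hlip, hunif, hvar⟩ := exists_lipschitzOnWith_tendsto_of_tendsto_ae_deriv hT.le
    (fun k => hderiv _) (fun k => hcont _) (fun k => hx'C _) hgv hx₀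
  exact ⟨φ ∘ ψ, hφ.comp hψ, xlim, C.toNNReal, hlip,
    inter_self (Icc (0 : ℝ) T) ▸ hlip.locallyBoundedVariationOn 0 T h0 (right_mem_Icc.2 hT.le),
    hunif, hvar⟩
end

section
/- The LipSwish activation function ρ : ℝ → ℝ defined by ρ(x) = 0.909 · x · σ(x), where σ(x) = 1/(1 + e^{−x}) is the sigmoid function, is Lipschitz continuous with Lipschitz constant at most 1: for all x, y ∈ ℝ, |ρ(x) − ρ(y)| ≤ |x − y|. -/
/-!
The derivative of `x σ(x)` is `σ(x)(1 + x(1 - σ(x)))`, which with `t = eˣ` reads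
`t(t + 1 + x)/(t + 1)²`. Its supremum (about `1.0998`, attained near `x = 2.4 ≈ log 11`)
is below `1000/909`: bounding `x` by the tangent line `x ≤ t/11 + log 11 - 1` of `log` at `11`
leaves a quadratic inequality in `t` with negative discriminant, and `x ≥ 1 - 1/t` gives the
lower bound. The mean value theorem then makes `0.909 · x σ(x)` 1-Lipschitz.
-/

open Real

lemma log_eleven_le : log 11 ≤ 12 / 5 := by
  rw [log_le_iff_le_exp (by norm_num)]
  have h : (11 : ℝ) ^ 5 ≤ exp (12 / 5) ^ 5 := by
    have he : exp (12 / 5) ^ 5 = exp 1 ^ 12 := by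
      rw [← exp_nat_mul, ← exp_nat_mul]; norm_num
    rw [he]
    calc (11 : ℝ) ^ 5 ≤ 2.7182818283 ^ 12 := by norm_num
      _ ≤ exp 1 ^ 12 := pow_le_pow_left₀ (by norm_num) exp_one_gt_d9.le 12
  exact le_of_pow_le_pow_left₀ (by norm_num) (exp_pos _).le h

lemma le_exp_div_eleven_add (x : ℝ) : x ≤ exp x / 11 + 7 / 5 := by
  have h := add_one_le_exp (x - log 11)
  rw [exp_sub, exp_log (by norm_num)] at h
  linarith [log_eleven_le]

lemma sigmoid_eq_exp_div (x : ℝ) : sigmoid x = exp x / (exp x + 1) := by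
  rw [sigmoid_def, exp_neg]
  field_simp

lemma hasDerivAt_mul_sigmoid (x : ℝ) :
    HasDerivAt (fun x ↦ x * sigmoid x) (sigmoid x * (1 + x * (1 - sigmoid x))) x :=
  ((hasDerivAt_id' x).mul (hasDerivAt_sigmoid x)).congr_deriv (by ring)

lemma abs_sigmoid_mul_one_add_le (x : ℝ) :
    |sigmoid x * (1 + x * (1 - sigmoid x))| ≤ 1000 / 909 := by
  set t := exp x with ht
  have htpos : 0 < t := exp_pos x
  have hupper : x ≤ t / 11 + 7 / 5 := le_exp_div_eleven_add x
  have hlower : 1 - t⁻¹ ≤ x := by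
    have h := add_one_le_exp (-x)
    rw [exp_neg] at h
    linarith
  have heq : sigmoid x * (1 + x * (1 - sigmoid x)) = t * (t + 1 + x) / (t + 1) ^ 2 := by
    rw [sigmoid_eq_exp_div, ← ht]
    field_simp
    ring
  rw [heq, abs_div, abs_of_pos (by positivity : (0:ℝ) < (t + 1) ^ 2), div_le_iff₀ (by positivity),
    abs_le]
  constructor
  · have ht_mul_inv : t * t⁻¹ = 1 := mul_inv_cancel₀ htpos.ne'
    nlinarith [mul_le_mul_of_nonneg_left hlower htpos.le]
  · -- `2497/230` is the vertex of the quadratic left after using `hupper`.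
    nlinarith [sq_nonneg (t - 2497 / 230), mul_le_mul_of_nonneg_left hupper htpos.le]

lemma abs_mul_sigmoid_sub_le (x y : ℝ) :
    |x * sigmoid x - y * sigmoid y| ≤ 1000 / 909 * |x - y| :=
  convex_univ.norm_image_sub_le_of_norm_hasDerivWithin_le
    (fun z _ ↦ (hasDerivAt_mul_sigmoid z).hasDerivWithinAt)
    (fun z _ ↦ abs_sigmoid_mul_one_add_le z) (Set.mem_univ y) (Set.mem_univ x)

/-- **The LipSwish activation function `ρ(x) = 0.909 · x · σ(x)`, with `σ` the sigmoid,
is Lipschitz with constant at most 1.** -/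
theorem lipswish_lipschitz_constant_le_one (x y : ℝ) :
    |0.909 * (x * (1 / (1 + Real.exp (-x)))) - 0.909 * (y * (1 / (1 + Real.exp (-y))))|
      ≤ |x - y| := by
  simp only [one_div, ← sigmoid_def]
  calc |0.909 * (x * sigmoid x) - 0.909 * (y * sigmoid y)|
      = 0.909 * |x * sigmoid x - y * sigmoid y| := by
        rw [← mul_sub, abs_mul, abs_of_pos (by norm_num)]
    _ ≤ 0.909 * (1000 / 909 * |x - y|) := by gcongr; exact abs_mul_sigmoid_sub_le x y
    _ = |x - y| := by ring
end
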